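/- arXiv:2004.07059 — 4 statements merged into one kernel-verified Lean document; each statement's English description precedes it below -/
import Mathlib

section
/- Let C = C(a₁, a₂, a₃, a₄, a₅) be a quaternary [n, 2, d] code with 1 + a₂ + a₃ + a₄ + a₅ = d. Then C is a Hermitian LCD code if and only if all of the following hold: (i) a₁ = n − d − 1; (ii) a₂ ≤ n − d − 1; (iii) a₃ ≤ n − d, a₄ ≤ n − d, a₅ ≤ n − d; (iv) if d is even then a₃ + a₄ + a₅ + a₃a₄ + a₄a₅ + a₅a₃ is odd, and if d is odd then a₃a₄ + a₄a₅ + a₅a₃ ≢ n − d (mod 2). -/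
open Finset

/-- The finite field with four elements. -/
abbrev F4 : Type := GaloisField 2 2

noncomputable instance : Fintype F4 := Fintype.ofFinite F4

lemma F4.card_eq : Fintype.card F4 = 4 := by
  simpa using GaloisField.card 2 2 (by norm_num)

lemma F4.exists_omega : ∃ x : F4, x ^ 2 + x + 1 = 0 := by
  classical
  obtain ⟨x, hx0, hx1⟩ : ∃ x : F4, x ≠ 0 ∧ x ≠ 1 := by
    by_contra h
    push_neg at h
    have hsub : (Finset.univ : Finset F4) ⊆ {0, 1} := by
      intro x _
      rcases eq_or_ne x 0 with h0 | h0
      · simp [h0]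
      · simp [h x h0]
    have h1 := Finset.card_le_card hsub
    have h2 : ({0, 1} : Finset F4).card ≤ 2 := (Finset.card_insert_le _ _).trans (by simp)
    have h3 : (Finset.univ : Finset F4).card = 4 := F4.card_eq
    omega
  refine ⟨x, ?_⟩
  have hx : x ^ Fintype.card F4 = x := FiniteField.pow_card x
  rw [F4.card_eq] at hx
  have hmul : x * (x - 1) * (x ^ 2 + x + 1) = 0 := by
    have : x * (x - 1) * (x ^ 2 + x + 1) = x ^ 4 - x := by ring
    rw [this, hx, sub_self]
  rcases mul_eq_zero.mp hmul with h | h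
  · rcases mul_eq_zero.mp h with h | h
    · exact absurd h hx0
    · exact absurd (sub_eq_zero.mp h) hx1
  · exact h

/-- A fixed root of `X² + X + 1` in `F₄`. -/
noncomputable def ω4 : F4 := Classical.choose F4.exists_omega

lemma ω4_spec : ω4 ^ 2 + ω4 + 1 = 0 := Classical.choose_spec F4.exists_omega

open scoped Classical in
/-- Hamming weight of a vector. -/
noncomputable def wt {n : ℕ} (x : Fin n → F4) : ℕ :=
  (Finset.univ.filter fun i => x i ≠ 0).card

/-- `C` is a code with minimum (nonzero) weight `d`. -/
noncomputable def hasMinWeight {n : ℕ} (C : Submodule F4 (Fin n → F4)) (d : ℕ) : Prop :=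
  (∀ x ∈ C, x ≠ 0 → d ≤ wt x) ∧ ∃ x ∈ C, x ≠ 0 ∧ wt x = d

/-- The Hermitian inner product on `F₄ⁿ`; the conjugate of `x` is `x²`. -/
noncomputable def hermInner {n : ℕ} (u v : Fin n → F4) : F4 := ∑ i, u i * (v i) ^ 2

/-- The Hermitian dual code. -/
noncomputable def hermDual {n : ℕ} (C : Submodule F4 (Fin n → F4)) : Submodule F4 (Fin n → F4) where
  carrier := {x | ∀ y ∈ C, hermInner x y = 0}
  zero_mem' := by intro y hy; simp [hermInner]
  add_mem' := by
    intro a b ha hb y hy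
    have := ha y hy
    have := hb y hy
    simp only [hermInner, Pi.add_apply, add_mul, Finset.sum_add_distrib] at *
    simp [*]
  smul_mem' := by
    intro c a ha y hy
    have h := ha y hy
    simp only [hermInner, Pi.smul_apply, smul_eq_mul, mul_assoc, ← Finset.mul_sum] at *
    simp [h]

/-- `C` is a Hermitian linear complementary dual code. -/
noncomputable def IsHermLCD {n : ℕ} (C : Submodule F4 (Fin n → F4)) : Prop :=
  C ⊓ hermDual C = ⊥

/-- The monomial linear map given by a permutation of coordinates followed by a
multiplication of each coordinate by a scalar. -/
noncomputable def monoMap {n : ℕ} (σ : Equiv.Perm (Fin n)) (s : Fin n → F4) :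
    (Fin n → F4) →ₗ[F4] (Fin n → F4) where
  toFun x := fun i => s i * x (σ i)
  map_add' a b := by funext i; simp [mul_add]
  map_smul' c a := by funext i; simp [smul_eq_mul]; ring

/-- Two codes are equivalent if one is obtained from the other by a permutation of the
coordinates and multiplication of coordinates by nonzero scalars. -/
noncomputable def codeEquiv {n : ℕ} (C C' : Submodule F4 (Fin n → F4)) : Prop :=
  ∃ (σ : Equiv.Perm (Fin n)) (s : Fin n → F4),
    (∀ i, s i ≠ 0) ∧ Submodule.map (monoMap σ s) C = C'

/-- First row of the generator matrix `G(a₁, a₂, a₃, a₄, a₅)`. -/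
noncomputable def row1 (n a₁ : ℕ) : Fin n → F4 := fun i =>
  if i.val = 0 then 1
  else if i.val < 2 + a₁ then 0
  else 1

/-- Second row of the generator matrix `G(a₁, a₂, a₃, a₄, a₅)`. -/
noncomputable def row2 (n a₁ a₂ a₃ a₄ : ℕ) : Fin n → F4 := fun i =>
  if i.val = 0 then 0
  else if i.val < 2 + a₁ then 1
  else if i.val < 2 + a₁ + a₂ then 0
  else if i.val < 2 + a₁ + a₂ + a₃ then 1
  else if i.val < 2 + a₁ + a₂ + a₃ + a₄ then ω4
  else ω4 ^ 2

set_option linter.unusedVariables false in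
/-- The code `C(a₁, a₂, a₃, a₄, a₅)`, of length `n = 2 + a₁ + a₂ + a₃ + a₄ + a₅`:
the span of the rows of the generator matrix `G(a₁, a₂, a₃, a₄, a₅)` whose columns are
`(1,0)ᵀ`, `(0,1)ᵀ`, `a₁` columns `(0,1)ᵀ`, `a₂` columns `(1,0)ᵀ`, `a₃` columns `(1,1)ᵀ`,
`a₄` columns `(1,ω)ᵀ` and `a₅` columns `(1,ω²)ᵀ`. -/
noncomputable def Ccode (n a₁ a₂ a₃ a₄ a₅ : ℕ) : Submodule F4 (Fin n → F4) :=
  Submodule.span F4 {row1 n a₁, row2 n a₁ a₂ a₃ a₄}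

/-- The largest minimum weight among Hermitian LCD `[n,2]` codes. -/
def optimalDist (n : ℕ) : ℕ :=
  if n % 5 = 1 ∨ n % 5 = 2 ∨ n % 5 = 3 then 4 * n / 5 else 4 * n / 5 - 1

/-- `C` is an optimal Hermitian LCD `[n, 2, d]` code. -/
noncomputable def IsOptimalLCD (n d : ℕ) (C : Submodule F4 (Fin n → F4)) : Prop :=
  Module.finrank F4 C = 2 ∧ hasMinWeight C d ∧ IsHermLCD C ∧ d = optimalDist n

/-- The linear map appending a zero coordinate: `x ↦ (x, 0)`. -/
noncomputable def extendZero (m : ℕ) : (Fin m → F4) →ₗ[F4] (Fin (m + 1) → F4) where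
  toFun x := Fin.snoc x 0
  map_add' a b := by
    funext i
    refine Fin.lastCases ?_ ?_ i <;> simp
  map_smul' c a := by
    funext i
    refine Fin.lastCases ?_ ?_ i <;> simp

-- basic F4 facts
lemma F4.two : (2 : F4) = 0 := by
  have : (2 : ℕ) = (2 : ℕ) := rfl
  exact_mod_cast (CharP.cast_eq_zero F4 2)

lemma hw2 : ω4 ^ 2 = ω4 + 1 := by
  linear_combination ω4_spec - (ω4 + 1) * F4.two

lemma hw0 : ω4 ≠ 0 := by
  intro h
  have := ω4_spec
  rw [h] at this
  simp at this

lemma hw1 : ω4 ≠ 1 := by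
  intro h
  have := ω4_spec
  rw [h] at this
  have : (1:F4) = 0 := by linear_combination this - F4.two
  simp at this

lemma hw3 : ω4 ^ 3 = 1 := by
  linear_combination (ω4 - 1) * ω4_spec

lemma hwsq0 : ω4 ^ 2 ≠ 0 := pow_ne_zero _ hw0

lemma hw1add : (1 : F4) + ω4 ≠ 0 := by
  intro h
  have : ω4 = 1 := by linear_combination h - F4.two
  exact hw1 this

lemma hw2add : (1 : F4) + ω4 ^ 2 ≠ 0 := by
  intro h
  exact hw0 (by linear_combination h - hw2 - F4.two)
lemma sum_Ico_const {M : Type*} [AddCommMonoid M] (g : ℕ → M) (a b : ℕ) (c : M)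
    (h : ∀ i, a ≤ i → i < b → g i = c) : ∑ i ∈ Finset.Ico a b, g i = (b - a) • c := by
  rw [← Nat.card_Ico a b, ← Finset.sum_const]
  exact Finset.sum_congr rfl fun i hi => h i (Finset.mem_Ico.mp hi).1 (Finset.mem_Ico.mp hi).2

lemma sum_blocks {M : Type*} [AddCommMonoid M] (n a₁ a₂ a₃ a₄ a₅ : ℕ)
    (hn : n = 2 + a₁ + a₂ + a₃ + a₄ + a₅) (g : ℕ → M) (c0 c1 c2 c3 c4 c5 : M)
    (h0 : g 0 = c0)
    (h1 : ∀ i, 1 ≤ i → i < 2 + a₁ → g i = c1)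
    (h2 : ∀ i, 2 + a₁ ≤ i → i < 2 + a₁ + a₂ → g i = c2)
    (h3 : ∀ i, 2 + a₁ + a₂ ≤ i → i < 2 + a₁ + a₂ + a₃ → g i = c3)
    (h4 : ∀ i, 2 + a₁ + a₂ + a₃ ≤ i → i < 2 + a₁ + a₂ + a₃ + a₄ → g i = c4)
    (h5 : ∀ i, 2 + a₁ + a₂ + a₃ + a₄ ≤ i → i < n → g i = c5) :
    ∑ i ∈ Finset.range n, g i =
      c0 + ((1 + a₁) • c1 + (a₂ • c2 + (a₃ • c3 + (a₄ • c4 + a₅ • c5)))) := by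
  rw [Finset.range_eq_Ico,
    ← Finset.sum_Ico_consecutive g (by omega : 0 ≤ 1) (by omega : 1 ≤ n),
    ← Finset.sum_Ico_consecutive g (by omega : 1 ≤ 2 + a₁) (by omega : 2 + a₁ ≤ n),
    ← Finset.sum_Ico_consecutive g (by omega : 2 + a₁ ≤ 2 + a₁ + a₂) (by omega : 2 + a₁ + a₂ ≤ n),
    ← Finset.sum_Ico_consecutive g (by omega : 2 + a₁ + a₂ ≤ 2 + a₁ + a₂ + a₃)
      (by omega : 2 + a₁ + a₂ + a₃ ≤ n),
    ← Finset.sum_Ico_consecutive g (by omega : 2 + a₁ + a₂ + a₃ ≤ 2 + a₁ + a₂ + a₃ + a₄)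
      (by omega : 2 + a₁ + a₂ + a₃ + a₄ ≤ n),
    sum_Ico_const g 0 1 c0 (fun i hi hi' => by
      have : i = 0 := by omega
      rw [this, h0]),
    sum_Ico_const g 1 (2 + a₁) c1 h1,
    sum_Ico_const g (2 + a₁) (2 + a₁ + a₂) c2 h2,
    sum_Ico_const g (2 + a₁ + a₂) (2 + a₁ + a₂ + a₃) c3 h3,
    sum_Ico_const g (2 + a₁ + a₂ + a₃) (2 + a₁ + a₂ + a₃ + a₄) c4 h4,
    sum_Ico_const g (2 + a₁ + a₂ + a₃ + a₄) n c5 h5,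
    show 1 - 0 = 1 from rfl, one_smul,
    show 2 + a₁ - 1 = 1 + a₁ by omega,
    show 2 + a₁ + a₂ - (2 + a₁) = a₂ by omega,
    show 2 + a₁ + a₂ + a₃ - (2 + a₁ + a₂) = a₃ by omega,
    show 2 + a₁ + a₂ + a₃ + a₄ - (2 + a₁ + a₂ + a₃) = a₄ by omega,
    show n - (2 + a₁ + a₂ + a₃ + a₄) = a₅ by omega]

/-- `row1` as a function of the natural index. -/
noncomputable def R1 (a₁ k : ℕ) : F4 :=
  if k = 0 then 1 else if k < 2 + a₁ then 0 else 1

/-- `row2` as a function of the natural index. -/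
noncomputable def R2 (a₁ a₂ a₃ a₄ k : ℕ) : F4 :=
  if k = 0 then 0
  else if k < 2 + a₁ then 1
  else if k < 2 + a₁ + a₂ then 0
  else if k < 2 + a₁ + a₂ + a₃ then 1
  else if k < 2 + a₁ + a₂ + a₃ + a₄ then ω4
  else ω4 ^ 2

lemma row1_eq (n a₁ : ℕ) : row1 n a₁ = fun i : Fin n => R1 a₁ i.val := rfl
lemma row2_eq (n a₁ a₂ a₃ a₄ : ℕ) :
    row2 n a₁ a₂ a₃ a₄ = fun i : Fin n => R2 a₁ a₂ a₃ a₄ i.val := rfl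

section evals
variable {a₁ a₂ a₃ a₄ : ℕ}

lemma R1_at0 : R1 a₁ 0 = 1 := by rw [R1, if_pos rfl]
lemma R1_b1 {i : ℕ} (h : 1 ≤ i) (h' : i < 2 + a₁) : R1 a₁ i = 0 := by
  rw [R1, if_neg (by omega), if_pos (by omega)]
lemma R1_hi {i : ℕ} (h : 2 + a₁ ≤ i) : R1 a₁ i = 1 := by
  rw [R1, if_neg (by omega), if_neg (by omega)]

lemma R2_at0 : R2 a₁ a₂ a₃ a₄ 0 = 0 := by rw [R2, if_pos rfl]
lemma R2_b1 {i : ℕ} (h : 1 ≤ i) (h' : i < 2 + a₁) : R2 a₁ a₂ a₃ a₄ i = 1 := by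
  rw [R2, if_neg (by omega), if_pos (by omega)]
lemma R2_b2 {i : ℕ} (h : 2 + a₁ ≤ i) (h' : i < 2 + a₁ + a₂) : R2 a₁ a₂ a₃ a₄ i = 0 := by
  rw [R2, if_neg (by omega), if_neg (by omega), if_pos (by omega)]
lemma R2_b3 {i : ℕ} (h : 2 + a₁ + a₂ ≤ i) (h' : i < 2 + a₁ + a₂ + a₃) :
    R2 a₁ a₂ a₃ a₄ i = 1 := by
  rw [R2, if_neg (by omega), if_neg (by omega), if_neg (by omega), if_pos (by omega)]
lemma R2_b4 {i : ℕ} (h : 2 + a₁ + a₂ + a₃ ≤ i) (h' : i < 2 + a₁ + a₂ + a₃ + a₄) :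
    R2 a₁ a₂ a₃ a₄ i = ω4 := by
  rw [R2, if_neg (by omega), if_neg (by omega), if_neg (by omega), if_neg (by omega),
    if_pos (by omega)]
lemma R2_b5 {i : ℕ} (h : 2 + a₁ + a₂ + a₃ + a₄ ≤ i) : R2 a₁ a₂ a₃ a₄ i = ω4 ^ 2 := by
  rw [R2, if_neg (by omega), if_neg (by omega), if_neg (by omega), if_neg (by omega),
    if_neg (by omega)]

end evals

lemma herm_sum (n : ℕ) (u v : ℕ → F4) :
    hermInner (fun i : Fin n => u i.val) (fun i : Fin n => v i.val) =
      ∑ k ∈ Finset.range n, u k * v k ^ 2 :=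
  Fin.sum_univ_eq_sum_range (fun k => u k * v k ^ 2) n

section grams
variable (n a₁ a₂ a₃ a₄ a₅ : ℕ) (hn : n = 2 + a₁ + a₂ + a₃ + a₄ + a₅)
include hn

lemma g11_eq : hermInner (row1 n a₁) (row1 n a₁) = ((1 + a₂ + a₃ + a₄ + a₅ : ℕ) : F4) := by
  rw [row1_eq, herm_sum,
    sum_blocks n a₁ a₂ a₃ a₄ a₅ hn _ 1 0 1 1 1 1
      (by rw [R1_at0]; ring)
      (fun i h h' => by rw [R1_b1 h h']; ring)
      (fun i h h' => by rw [R1_hi h]; ring)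
      (fun i h h' => by rw [R1_hi (by omega)]; ring)
      (fun i h h' => by rw [R1_hi (by omega)]; ring)
      (fun i h h' => by rw [R1_hi (by omega)]; ring)]
  push_cast [nsmul_eq_mul]
  ring

lemma g22_eq : hermInner (row2 n a₁ a₂ a₃ a₄) (row2 n a₁ a₂ a₃ a₄) =
    ((1 + a₁ + a₃ + a₄ + a₅ : ℕ) : F4) := by
  rw [row2_eq, herm_sum,
    sum_blocks n a₁ a₂ a₃ a₄ a₅ hn _ 0 1 0 1 1 1
      (by rw [R2_at0]; ring)
      (fun i h h' => by rw [R2_b1 h h']; ring)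
      (fun i h h' => by rw [R2_b2 h h']; ring)
      (fun i h h' => by rw [R2_b3 h h']; ring)
      (fun i h h' => by rw [R2_b4 h h']; linear_combination hw3)
      (fun i h h' => by rw [R2_b5 h]; linear_combination (ω4 ^ 3 + 1) * hw3)]
  push_cast [nsmul_eq_mul]
  ring

lemma g12_eq : hermInner (row1 n a₁) (row2 n a₁ a₂ a₃ a₄) =
    (a₃ : F4) + (a₄ : F4) * ω4 ^ 2 + (a₅ : F4) * ω4 := by
  rw [row1_eq, row2_eq, herm_sum,
    sum_blocks n a₁ a₂ a₃ a₄ a₅ hn _ 0 0 0 1 (ω4 ^ 2) ω4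
      (by rw [R1_at0, R2_at0]; ring)
      (fun i h h' => by rw [R1_b1 h h']; ring)
      (fun i h h' => by rw [R2_b2 h h']; ring)
      (fun i h h' => by rw [R1_hi (by omega), R2_b3 h h']; ring)
      (fun i h h' => by rw [R1_hi (by omega), R2_b4 h h']; ring)
      (fun i h h' => by rw [R1_hi (by omega), R2_b5 h]; linear_combination ω4 * hw3)]
  push_cast [nsmul_eq_mul]
  ring

lemma g21_eq : hermInner (row2 n a₁ a₂ a₃ a₄) (row1 n a₁) =
    (a₃ : F4) + (a₄ : F4) * ω4 + (a₅ : F4) * ω4 ^ 2 := by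
  rw [row1_eq, row2_eq, herm_sum,
    sum_blocks n a₁ a₂ a₃ a₄ a₅ hn _ 0 0 0 1 ω4 (ω4 ^ 2)
      (by rw [R1_at0, R2_at0]; ring)
      (fun i h h' => by rw [R1_b1 h h']; ring)
      (fun i h h' => by rw [R2_b2 h h']; ring)
      (fun i h h' => by rw [R1_hi (by omega), R2_b3 h h']; ring)
      (fun i h h' => by rw [R1_hi (by omega), R2_b4 h h']; ring)
      (fun i h h' => by rw [R1_hi (by omega), R2_b5 h]; ring)]
  push_cast [nsmul_eq_mul]
  ring

end grams

open scoped Classical in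
lemma wt_sum (n : ℕ) (u : ℕ → F4) :
    wt (fun i : Fin n => u i.val) =
      ∑ k ∈ Finset.range n, (if u k ≠ 0 then 1 else 0 : ℕ) := by
  classical
  rw [wt, Finset.card_filter]
  exact Fin.sum_univ_eq_sum_range (fun k => if u k ≠ 0 then 1 else 0) n

section wts
variable (n a₁ a₂ a₃ a₄ a₅ : ℕ) (hn : n = 2 + a₁ + a₂ + a₃ + a₄ + a₅)
include hn

lemma wt_row2 : wt (row2 n a₁ a₂ a₃ a₄) = 1 + a₁ + a₃ + a₄ + a₅ := by
  rw [row2_eq, wt_sum,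
    sum_blocks n a₁ a₂ a₃ a₄ a₅ hn _ 0 1 0 1 1 1
      (by rw [if_neg (not_not.mpr R2_at0)])
      (fun i h h' => by rw [if_pos (by rw [R2_b1 h h']; exact one_ne_zero)])
      (fun i h h' => by rw [if_neg (not_not.mpr (R2_b2 h h'))])
      (fun i h h' => by rw [if_pos (by rw [R2_b3 h h']; exact one_ne_zero)])
      (fun i h h' => by rw [if_pos (by rw [R2_b4 h h']; exact hw0)])
      (fun i h h' => by rw [if_pos (by rw [R2_b5 h]; exact hwsq0)])]
  simp only [smul_eq_mul]
  omega

omit hn in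
lemma combo_eq (c : F4) : row1 n a₁ + c • row2 n a₁ a₂ a₃ a₄ =
    fun i : Fin n => R1 a₁ i.val + c * R2 a₁ a₂ a₃ a₄ i.val := rfl

lemma wt_combo1 : wt (row1 n a₁ + (1:F4) • row2 n a₁ a₂ a₃ a₄) = 2 + a₁ + a₂ + a₄ + a₅ := by
  rw [combo_eq, wt_sum n (fun k => R1 a₁ k + (1:F4) * R2 a₁ a₂ a₃ a₄ k),
    sum_blocks n a₁ a₂ a₃ a₄ a₅ hn _ 1 1 1 0 1 1
      (by rw [if_pos (by rw [R1_at0, R2_at0]; simp)])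
      (fun i h h' => by rw [if_pos (by rw [R1_b1 h h', R2_b1 h h']; simp)])
      (fun i h h' => by rw [if_pos (by rw [R1_hi h, R2_b2 h h']; simp)])
      (fun i h h' => by
        rw [if_neg (not_not.mpr (by
          rw [R1_hi (by omega), R2_b3 h h']; linear_combination F4.two))])
      (fun i h h' => by rw [if_pos (by
        rw [R1_hi (by omega), R2_b4 h h']; simpa using hw1add)])
      (fun i h h' => by rw [if_pos (by
        rw [R1_hi (by omega), R2_b5 h]; simpa using hw2add)])]
  simp only [smul_eq_mul]
  omega

lemma wt_combo2 : wt (row1 n a₁ + ω4 ^ 2 • row2 n a₁ a₂ a₃ a₄) = 2 + a₁ + a₂ + a₃ + a₅ := by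
  rw [combo_eq, wt_sum n (fun k => R1 a₁ k + ω4 ^ 2 * R2 a₁ a₂ a₃ a₄ k),
    sum_blocks n a₁ a₂ a₃ a₄ a₅ hn _ 1 1 1 1 0 1
      (by rw [if_pos (by rw [R1_at0, R2_at0]; simp)])
      (fun i h h' => by rw [if_pos (by rw [R1_b1 h h', R2_b1 h h']; simpa using hwsq0)])
      (fun i h h' => by rw [if_pos (by rw [R1_hi h, R2_b2 h h']; simp)])
      (fun i h h' => by rw [if_pos (by
        rw [R1_hi (by omega), R2_b3 h h']; simpa using hw2add)])
      (fun i h h' => by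
        rw [if_neg (not_not.mpr (by
          rw [R1_hi (by omega), R2_b4 h h']
          linear_combination hw3 + F4.two))])
      (fun i h h' => by rw [if_pos (by
        rw [R1_hi (by omega), R2_b5 h]
        intro hcon
        exact hw1add (by linear_combination hcon - ω4 * hw3))])]
  simp only [smul_eq_mul]
  omega

lemma wt_combo3 : wt (row1 n a₁ + ω4 • row2 n a₁ a₂ a₃ a₄) = 2 + a₁ + a₂ + a₃ + a₄ := by
  rw [combo_eq, wt_sum n (fun k => R1 a₁ k + ω4 * R2 a₁ a₂ a₃ a₄ k),
    sum_blocks n a₁ a₂ a₃ a₄ a₅ hn _ 1 1 1 1 1 0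
      (by rw [if_pos (by rw [R1_at0, R2_at0]; simp)])
      (fun i h h' => by rw [if_pos (by rw [R1_b1 h h', R2_b1 h h']; simpa using hw0)])
      (fun i h h' => by rw [if_pos (by rw [R1_hi h, R2_b2 h h']; simp)])
      (fun i h h' => by rw [if_pos (by
        rw [R1_hi (by omega), R2_b3 h h']; simpa using hw1add)])
      (fun i h h' => by rw [if_pos (by
        rw [R1_hi (by omega), R2_b4 h h']; simpa [sq] using hw2add)])
      (fun i h h' => by
        rw [if_neg (not_not.mpr (by
          rw [R1_hi (by omega), R2_b5 h]
          linear_combination hw3 + F4.two))])]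
  simp only [smul_eq_mul]
  omega

end wts

section herm
variable {n : ℕ}

lemma hermInner_add_left (u v w : Fin n → F4) :
    hermInner (u + v) w = hermInner u w + hermInner v w := by
  simp [hermInner, add_mul, Finset.sum_add_distrib]

lemma hermInner_smul_left (c : F4) (u w : Fin n → F4) :
    hermInner (c • u) w = c * hermInner u w := by
  simp [hermInner, Finset.mul_sum, mul_assoc]

lemma hermInner_zero_right (u : Fin n → F4) : hermInner u 0 = 0 := by
  simp [hermInner]

lemma hermInner_add_right (u v w : Fin n → F4) :
    hermInner u (v + w) = hermInner u v + hermInner u w := by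
  simp only [hermInner, Pi.add_apply, ← Finset.sum_add_distrib]
  refine Finset.sum_congr rfl fun i _ => ?_
  linear_combination (u i * v i * w i) * F4.two

lemma hermInner_smul_right (c : F4) (u v : Fin n → F4) :
    hermInner u (c • v) = c ^ 2 * hermInner u v := by
  simp only [hermInner, Pi.smul_apply, smul_eq_mul, Finset.mul_sum]
  exact Finset.sum_congr rfl fun i _ => by ring

lemma hermInner_conj (u v : Fin n → F4) : hermInner v u = hermInner u v ^ 2 := by
  have hcard : Fintype.card F4 = 4 := F4.card_eq
  rw [hermInner, hermInner, sum_pow_char]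
  refine Finset.sum_congr rfl fun i _ => ?_
  have h4 : v i ^ 4 = v i := by
    have := FiniteField.pow_card (v i)
    rwa [hcard] at this
  rw [mul_pow, ← pow_mul, show 2 * 2 = 4 from rfl, h4]
  ring

lemma mem_dual_pair_iff (r s u : Fin n → F4) :
    u ∈ hermDual (Submodule.span F4 {r, s}) ↔ hermInner u r = 0 ∧ hermInner u s = 0 := by
  constructor
  · intro h
    exact ⟨h r (Submodule.subset_span (by simp)),
      h s (Submodule.subset_span (by simp))⟩
  · rintro ⟨h1, h2⟩ y hy
    induction hy using Submodule.span_induction with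
    | mem x hx =>
      rcases hx with rfl | hx
      · exact h1
      · rw [Set.mem_singleton_iff] at hx; rw [hx]; exact h2
    | zero => exact hermInner_zero_right u
    | add a b _ _ ha hb => rw [hermInner_add_right, ha, hb, add_zero]
    | smul c a _ ha => rw [hermInner_smul_right, ha, mul_zero]

end herm

lemma lcd_iff_det_generic {n : ℕ} (r s : Fin n → F4) (i0 i1 : Fin n)
    (h00 : r i0 = 1) (h01 : r i1 = 0) (h10 : s i0 = 0) (h11 : s i1 = 1) :
    IsHermLCD (Submodule.span F4 {r, s}) ↔
      hermInner r r * hermInner s s - hermInner r s * hermInner s r ≠ 0 := by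
  set g11 := hermInner r r
  set g12 := hermInner r s
  set g21 := hermInner s r
  set g22 := hermInner s s
  have hconj : g21 = g12 ^ 2 := hermInner_conj r s
  have hrmem : r ∈ Submodule.span F4 {r, s} := Submodule.subset_span (by simp)
  have hsmem : s ∈ Submodule.span F4 {r, s} := Submodule.subset_span (by simp)
  constructor
  · intro hlcd hdet
    by_cases hz : g12 = 0 ∧ g22 = 0
    · -- s itself lies in the intersection
      have hdual : s ∈ hermDual (Submodule.span F4 {r, s}) := by
        rw [mem_dual_pair_iff]
        exact ⟨by rw [show hermInner s r = g21 from rfl, hconj, hz.1]; ring, hz.2⟩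
      have : s ∈ (⊥ : Submodule F4 (Fin n → F4)) := by
        rw [← hlcd]; exact ⟨hsmem, hdual⟩
      rw [Submodule.mem_bot] at this
      have := congrFun this i1
      rw [h11] at this
      exact one_ne_zero this
    · -- g22 • r + g12 • s lies in the intersection
      set u := g22 • r + g12 • s with hu
      have humem : u ∈ Submodule.span F4 {r, s} :=
        Submodule.add_mem _ (Submodule.smul_mem _ _ hrmem) (Submodule.smul_mem _ _ hsmem)
      have hdual : u ∈ hermDual (Submodule.span F4 {r, s}) := by
        rw [mem_dual_pair_iff]
        constructor
        · rw [hermInner_add_left, hermInner_smul_left, hermInner_smul_left]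
          linear_combination hdet + g12 * g21 * F4.two
        · rw [hermInner_add_left, hermInner_smul_left, hermInner_smul_left]
          linear_combination g12 * g22 * F4.two
      have : u ∈ (⊥ : Submodule F4 (Fin n → F4)) := by
        rw [← hlcd]; exact ⟨humem, hdual⟩
      rw [Submodule.mem_bot] at this
      have h0 := congrFun this i0
      have h1 := congrFun this i1
      simp only [hu, Pi.add_apply, Pi.smul_apply, smul_eq_mul, Pi.zero_apply,
        h00, h01, h10, h11] at h0 h1
      exact hz ⟨by linear_combination h1, by linear_combination h0⟩
  · intro hdet
    rw [IsHermLCD, eq_bot_iff]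
    rintro u ⟨huC, huD⟩
    obtain ⟨a, b, hab⟩ := Submodule.mem_span_pair.mp huC
    have e1 : hermInner u r = 0 := huD r hrmem
    have e2 : hermInner u s = 0 := huD s hsmem
    rw [← hab, hermInner_add_left, hermInner_smul_left, hermInner_smul_left] at e1 e2
    have ha : a * (g11 * g22 - g12 * g21) = 0 := by linear_combination g22 * e1 - g21 * e2
    have hb : b * (g11 * g22 - g12 * g21) = 0 := by linear_combination g11 * e2 - g12 * e1
    have ha0 : a = 0 := by
      rcases mul_eq_zero.mp ha with h | h
      · exact h
      · exact absurd h hdet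
    have hb0 : b = 0 := by
      rcases mul_eq_zero.mp hb with h | h
      · exact h
      · exact absurd h hdet
    rw [ha0, hb0] at hab
    simp only [zero_smul, add_zero] at hab
    rw [Submodule.mem_bot, ← hab]

lemma cast_mod_two (k : ℕ) : ((k : ℕ) : F4) = ((k % 2 : ℕ) : F4) := by
  conv_lhs => rw [← Nat.mod_add_div k 2]
  push_cast
  linear_combination ((k / 2 : ℕ) : F4) * F4.two

lemma detF2 (x y z : F4) (hx : x = 0 ∨ x = 1) (hy : y = 0 ∨ y = 1) (hz : z = 0 ∨ z = 1) :
    (x + y * ω4 ^ 2 + z * ω4) * (x + y * ω4 + z * ω4 ^ 2) =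
      x + y + z + (x * y + (y * z + z * x)) := by
  rcases hx with rfl | rfl <;> rcases hy with rfl | rfl <;> rcases hz with rfl | rfl
  · ring
  · linear_combination (ω4 - 1) * ω4_spec
  · linear_combination (ω4 - 1) * ω4_spec
  · linear_combination (ω4 ^ 2 + ω4 - 1) * ω4_spec - F4.two
  · ring
  · linear_combination ω4 * ω4_spec - F4.two
  · linear_combination ω4 * ω4_spec - F4.two
  · linear_combination (ω4 ^ 2 + ω4 + 1) * ω4_spec - 3 * F4.two

lemma cast_eq_zero_or_one (k : ℕ) : ((k : ℕ) : F4) = 0 ∨ ((k : ℕ) : F4) = 1 := by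
  rw [cast_mod_two]
  rcases Nat.mod_two_eq_zero_or_one k with h | h <;> rw [h] <;> simp

lemma det_cast (a₁ a₂ a₃ a₄ a₅ : ℕ) :
    ((1 + a₂ + a₃ + a₄ + a₅ : ℕ) : F4) * ((1 + a₁ + a₃ + a₄ + a₅ : ℕ) : F4) -
      ((a₃ : F4) + (a₄ : F4) * ω4 ^ 2 + (a₅ : F4) * ω4) *
        ((a₃ : F4) + (a₄ : F4) * ω4 + (a₅ : F4) * ω4 ^ 2) =
      ((((1 + a₂ + a₃ + a₄ + a₅) * (1 + a₁ + a₃ + a₄ + a₅) +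
        (a₃ + a₄ + a₅ + a₃ * a₄ + a₄ * a₅ + a₅ * a₃)) % 2 : ℕ) : F4) := by
  rw [detF2 _ _ _ (cast_eq_zero_or_one a₃) (cast_eq_zero_or_one a₄) (cast_eq_zero_or_one a₅),
    ← cast_mod_two]
  push_cast
  linear_combination (-( (a₃:F4) + (a₄:F4) + (a₅:F4) + (a₃:F4)*(a₄:F4) + (a₄:F4)*(a₅:F4)
    + (a₅:F4)*(a₃:F4))) * F4.two

lemma cast_mod_ne_zero_iff (k : ℕ) : ((k % 2 : ℕ) : F4) ≠ 0 ↔ k % 2 = 1 := by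
  rcases Nat.mod_two_eq_zero_or_one k with h | h <;> rw [h] <;> simp

lemma parity_equiv (n d a₁ a₂ a₃ a₄ a₅ : ℕ)
    (hn : n = 2 + a₁ + a₂ + a₃ + a₄ + a₅) (hd : 1 + a₂ + a₃ + a₄ + a₅ = d) :
    (((1 + a₂ + a₃ + a₄ + a₅) * (1 + a₁ + a₃ + a₄ + a₅) +
        (a₃ + a₄ + a₅ + a₃ * a₄ + a₄ * a₅ + a₅ * a₃)) % 2 = 1) ↔
      ((Even d → Odd (a₃ + a₄ + a₅ + a₃ * a₄ + a₄ * a₅ + a₅ * a₃)) ∧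
        (Odd d → ¬ (a₃ * a₄ + a₄ * a₅ + a₅ * a₃ ≡ n - d [MOD 2]))) := by
  subst hd
  subst hn
  have hA0 : (1 + a₂ + a₃ + a₄ + a₅) % 2 = 0 →
      ((1 + a₂ + a₃ + a₄ + a₅) * (1 + a₁ + a₃ + a₄ + a₅)) % 2 = 0 := by
    intro h
    obtain ⟨k, hk⟩ : ∃ k, 1 + a₂ + a₃ + a₄ + a₅ = 2 * k := ⟨(1 + a₂ + a₃ + a₄ + a₅) / 2, by omega⟩
    have h2 : (1 + a₂ + a₃ + a₄ + a₅) * (1 + a₁ + a₃ + a₄ + a₅) =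
        2 * (k * (1 + a₁ + a₃ + a₄ + a₅)) := by rw [hk]; ring
    omega
  have hA1 : (1 + a₂ + a₃ + a₄ + a₅) % 2 = 1 →
      ((1 + a₂ + a₃ + a₄ + a₅) * (1 + a₁ + a₃ + a₄ + a₅)) % 2 =
        (1 + a₁ + a₃ + a₄ + a₅) % 2 := by
    intro h
    obtain ⟨k, hk⟩ : ∃ k, 1 + a₂ + a₃ + a₄ + a₅ = 2 * k + 1 :=
      ⟨(1 + a₂ + a₃ + a₄ + a₅) / 2, by omega⟩
    have h2 : (1 + a₂ + a₃ + a₄ + a₅) * (1 + a₁ + a₃ + a₄ + a₅) =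
        2 * (k * (1 + a₁ + a₃ + a₄ + a₅)) + (1 + a₁ + a₃ + a₄ + a₅) := by rw [hk]; ring
    omega
  simp only [Nat.even_iff, Nat.odd_iff, Nat.ModEq]
  omega

/-- characterisation of the Hermitian LCD property for `C(a₁, a₂, a₃, a₄, a₅)`. -/
theorem stmt1 (n d a₁ a₂ a₃ a₄ a₅ : ℕ)
    (hn : n = 2 + a₁ + a₂ + a₃ + a₄ + a₅)
    (hdim : Module.finrank F4 (Ccode n a₁ a₂ a₃ a₄ a₅) = 2)
    (hmin : hasMinWeight (Ccode n a₁ a₂ a₃ a₄ a₅) d)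
    (hd : 1 + a₂ + a₃ + a₄ + a₅ = d) :
    IsHermLCD (Ccode n a₁ a₂ a₃ a₄ a₅) ↔
      (a₁ = n - d - 1 ∧ a₂ ≤ n - d - 1 ∧
        a₃ ≤ n - d ∧ a₄ ≤ n - d ∧ a₅ ≤ n - d ∧
        (Even d → Odd (a₃ + a₄ + a₅ + a₃ * a₄ + a₄ * a₅ + a₅ * a₃)) ∧
        (Odd d → ¬ (a₃ * a₄ + a₄ * a₅ + a₅ * a₃ ≡ n - d [MOD 2]))) := by
  have hr : row1 n a₁ ∈ Ccode n a₁ a₂ a₃ a₄ a₅ := Submodule.subset_span (by simp)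
  have hs : row2 n a₁ a₂ a₃ a₄ ∈ Ccode n a₁ a₂ a₃ a₄ a₅ := Submodule.subset_span (by simp)
  have e0n : (0 : ℕ) < n := by omega
  have e1n : (1 : ℕ) < n := by omega
  -- the LCD property is equivalent to the parity condition
  have hiff : IsHermLCD (Ccode n a₁ a₂ a₃ a₄ a₅) ↔
      (((1 + a₂ + a₃ + a₄ + a₅) * (1 + a₁ + a₃ + a₄ + a₅) +
        (a₃ + a₄ + a₅ + a₃ * a₄ + a₄ * a₅ + a₅ * a₃)) % 2 = 1) := by
    rw [Ccode, lcd_iff_det_generic (row1 n a₁) (row2 n a₁ a₂ a₃ a₄) ⟨0, e0n⟩ ⟨1, e1n⟩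
        (show R1 a₁ 0 = 1 from R1_at0)
        (show R1 a₁ 1 = 0 from R1_b1 le_rfl (by omega))
        (show R2 a₁ a₂ a₃ a₄ 0 = 0 from R2_at0)
        (show R2 a₁ a₂ a₃ a₄ 1 = 1 from R2_b1 le_rfl (by omega)),
      g11_eq n a₁ a₂ a₃ a₄ a₅ hn, g22_eq n a₁ a₂ a₃ a₄ a₅ hn, g12_eq n a₁ a₂ a₃ a₄ a₅ hn,
      g21_eq n a₁ a₂ a₃ a₄ a₅ hn, det_cast]
    exact cast_mod_ne_zero_iff _
  rw [hiff, parity_equiv n d a₁ a₂ a₃ a₄ a₅ hn hd]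
  -- the inequalities hold unconditionally, thanks to the minimum weight hypothesis
  have hwt0 : wt (0 : Fin n → F4) = 0 := by simp [wt]
  have hne2 : row2 n a₁ a₂ a₃ a₄ ≠ 0 := by
    intro h
    have h2 := wt_row2 n a₁ a₂ a₃ a₄ a₅ hn
    rw [h, hwt0] at h2
    omega
  have hw2 := hmin.1 _ hs hne2
  rw [wt_row2 n a₁ a₂ a₃ a₄ a₅ hn] at hw2
  have hcmem : ∀ c : F4, row1 n a₁ + c • row2 n a₁ a₂ a₃ a₄ ∈ Ccode n a₁ a₂ a₃ a₄ a₅ :=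
    fun c => Submodule.add_mem _ hr (Submodule.smul_mem _ _ hs)
  have hwc1 := hmin.1 _ (hcmem 1) (by
    intro h
    have h2 := wt_combo1 n a₁ a₂ a₃ a₄ a₅ hn
    rw [h, hwt0] at h2
    omega)
  rw [wt_combo1 n a₁ a₂ a₃ a₄ a₅ hn] at hwc1
  have hwc2 := hmin.1 _ (hcmem (ω4 ^ 2)) (by
    intro h
    have h2 := wt_combo2 n a₁ a₂ a₃ a₄ a₅ hn
    rw [h, hwt0] at h2
    omega)
  rw [wt_combo2 n a₁ a₂ a₃ a₄ a₅ hn] at hwc2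
  have hwc3 := hmin.1 _ (hcmem ω4) (by
    intro h
    have h2 := wt_combo3 n a₁ a₂ a₃ a₄ a₅ hn
    rw [h, hwt0] at h2
    omega)
  rw [wt_combo3 n a₁ a₂ a₃ a₄ a₅ hn] at hwc3
  constructor
  · intro hpar
    exact ⟨by omega, by omega, by omega, by omega, by omega, hpar.1, hpar.2⟩
  · intro h
    exact ⟨h.2.2.2.2.2.1, h.2.2.2.2.2.2⟩
end

section
/- Let C = C(a₁, a₂, a₃, a₄, a₅) be a quaternary [n, 2, d] code with 1 + a₂ + a₃ + a₄ + a₅ = d, set bᵢ = (n − d) − aᵢ for 1 ≤ i ≤ 5 and Δ = 4n − 5d. If C is a Hermitian LCD code, then 0 ≤ b₃ ≤ Δ, 0 ≤ b₄ ≤ Δ, and 0 ≤ b₅ ≤ Δ. -/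
open Finset

open scoped Classical in
lemma wt_add_card_le {n : ℕ} (v : Fin n → F4) (S : Finset (Fin n))
    (h : ∀ i ∈ S, v i = 0) : wt v + S.card ≤ n := by
  have hdisj : Disjoint (Finset.univ.filter fun i => v i ≠ 0) S := by
    rw [Finset.disjoint_left]
    intro i hi hiS
    exact (Finset.mem_filter.mp hi).2 (h i hiS)
  calc wt v + S.card = ((Finset.univ.filter fun i => v i ≠ 0) ∪ S).card :=
        (Finset.card_union_of_disjoint hdisj).symm
    _ ≤ (Finset.univ : Finset (Fin n)).card := Finset.card_le_card (Finset.subset_univ _)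
    _ = n := by simp

lemma card_filter_Ico (n l u : ℕ) (hu : u ≤ n)
    [DecidablePred fun i : Fin n => l ≤ i.val ∧ i.val < u] :
    (Finset.univ.filter fun i : Fin n => l ≤ i.val ∧ i.val < u).card = u - l := by
  have himg : Finset.image Fin.val
      (Finset.univ.filter fun i : Fin n => l ≤ i.val ∧ i.val < u) = Finset.Ico l u := by
    ext m
    simp only [Finset.mem_image, Finset.mem_filter, Finset.mem_univ, true_and,
      Finset.mem_Ico]
    constructor
    · rintro ⟨i, hi, rfl⟩; exact hi
    · rintro ⟨hl, hm⟩; exact ⟨⟨m, lt_of_lt_of_le hm hu⟩, ⟨hl, hm⟩, rfl⟩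
  have := Finset.card_image_of_injective
      (Finset.univ.filter fun i : Fin n => l ≤ i.val ∧ i.val < u) Fin.val_injective
  rw [himg] at this
  rw [← this, Nat.card_Ico]

lemma key_bound {n d : ℕ} {C : Submodule F4 (Fin n → F4)} (hmin : hasMinWeight C d)
    {v : Fin n → F4} (hv : v ∈ C) (hv0 : v ≠ 0) (S : Finset (Fin n))
    (h0 : ∀ i ∈ S, v i = 0) : d + S.card ≤ n := by
  have h1 := hmin.1 v hv hv0
  have h2 := wt_add_card_le v S h0
  omega

lemma F4.one_add_one : (1 : F4) + 1 = 0 := by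
  have h2 : (2 : F4) = 0 := by
    have := CharP.cast_eq_zero F4 2
    simpa using this
  linear_combination h2

lemma F4.omega_cube₁ : (1 : F4) + ω4 * ω4 ^ 2 = 0 := by
  linear_combination (ω4 - 1) * ω4_spec + F4.one_add_one

lemma F4.omega_cube₂ : (1 : F4) + ω4 ^ 2 * ω4 = 0 := by
  linear_combination (ω4 - 1) * ω4_spec + F4.one_add_one

lemma row1_val0 {n a₁ : ℕ} {i : Fin n} (h : i.val = 0) : row1 n a₁ i = 1 := by
  simp only [row1]; rw [if_pos h]

lemma row1_val_ge {n a₁ : ℕ} {i : Fin n} (h : 2 + a₁ ≤ i.val) : row1 n a₁ i = 1 := by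
  simp only [row1]; rw [if_neg (by omega), if_neg (by omega)]

lemma row2_val0 {n a₁ a₂ a₃ a₄ : ℕ} {i : Fin n} (h : i.val = 0) :
    row2 n a₁ a₂ a₃ a₄ i = 0 := by
  simp only [row2]; rw [if_pos h]

lemma row2_val1 {n a₁ a₂ a₃ a₄ : ℕ} {i : Fin n} (h : i.val = 1) :
    row2 n a₁ a₂ a₃ a₄ i = 1 := by
  simp only [row2]; rw [if_neg (by omega), if_pos (by omega)]

lemma row2_blk₂ {n a₁ a₂ a₃ a₄ : ℕ} {i : Fin n} (hl : 2 + a₁ ≤ i.val)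
    (hu : i.val < 2 + a₁ + a₂) : row2 n a₁ a₂ a₃ a₄ i = 0 := by
  simp only [row2]; rw [if_neg (by omega), if_neg (by omega), if_pos (by omega)]

lemma row2_blk₃ {n a₁ a₂ a₃ a₄ : ℕ} {i : Fin n} (hl : 2 + a₁ + a₂ ≤ i.val)
    (hu : i.val < 2 + a₁ + a₂ + a₃) : row2 n a₁ a₂ a₃ a₄ i = 1 := by
  simp only [row2]
  rw [if_neg (by omega), if_neg (by omega), if_neg (by omega), if_pos (by omega)]

lemma row2_blk₄ {n a₁ a₂ a₃ a₄ : ℕ} {i : Fin n} (hl : 2 + a₁ + a₂ + a₃ ≤ i.val)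
    (hu : i.val < 2 + a₁ + a₂ + a₃ + a₄) : row2 n a₁ a₂ a₃ a₄ i = ω4 := by
  simp only [row2]
  rw [if_neg (by omega), if_neg (by omega), if_neg (by omega), if_neg (by omega),
    if_pos (by omega)]

lemma row2_blk₅ {n a₁ a₂ a₃ a₄ : ℕ} {i : Fin n} (hl : 2 + a₁ + a₂ + a₃ + a₄ ≤ i.val) :
    row2 n a₁ a₂ a₃ a₄ i = ω4 ^ 2 := by
  simp only [row2]
  rw [if_neg (by omega), if_neg (by omega), if_neg (by omega), if_neg (by omega),
    if_neg (by omega)]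

lemma zero_not_blk {n l u : ℕ} (hl : 0 < l) {i : Fin n} (h : i.val = 0) :
    i ∉ (Finset.univ.filter fun j : Fin n => l ≤ j.val ∧ j.val < u) := by
  simp only [Finset.mem_filter, Finset.mem_univ, true_and, h]
  omega

lemma stmt4_arith (n d a₁ a₂ a₃ a₄ a₅ : ℕ) (b₃ b₄ b₅ Δ : ℤ)
    (hn : n = 2 + a₁ + a₂ + a₃ + a₄ + a₅) (hd : 1 + a₂ + a₃ + a₄ + a₅ = d)
    (hb₃ : b₃ = ((n : ℤ) - d) - a₃) (hb₄ : b₄ = ((n : ℤ) - d) - a₄)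
    (hb₅ : b₅ = ((n : ℤ) - d) - a₅) (hΔ : Δ = 4 * (n : ℤ) - 5 * d)
    (h2 : d + (1 + a₂) ≤ n) (h3 : d + a₃ ≤ n) (h4 : d + a₄ ≤ n) (h5 : d + a₅ ≤ n) :
    (0 ≤ b₃ ∧ b₃ ≤ Δ) ∧ (0 ≤ b₄ ∧ b₄ ≤ Δ) ∧ (0 ≤ b₅ ∧ b₅ ≤ Δ) := by
  subst hb₃ hb₄ hb₅ hΔ
  omega

set_option maxHeartbeats 1000000 in
/-- if `C(a₁, a₂, a₃, a₄, a₅)` is Hermitian LCD then `0 ≤ b₃, b₄, b₅ ≤ Δ`. -/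
theorem stmt4 (n d a₁ a₂ a₃ a₄ a₅ : ℕ)
    (hn : n = 2 + a₁ + a₂ + a₃ + a₄ + a₅)
    (hdim : Module.finrank F4 (Ccode n a₁ a₂ a₃ a₄ a₅) = 2)
    (hmin : hasMinWeight (Ccode n a₁ a₂ a₃ a₄ a₅) d)
    (hd : 1 + a₂ + a₃ + a₄ + a₅ = d)
    (b₃ b₄ b₅ Δ : ℤ)
    (hb₃ : b₃ = ((n : ℤ) - d) - a₃) (hb₄ : b₄ = ((n : ℤ) - d) - a₄)
    (hb₅ : b₅ = ((n : ℤ) - d) - a₅) (hΔ : Δ = 4 * (n : ℤ) - 5 * d)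
    (hlcd : IsHermLCD (Ccode n a₁ a₂ a₃ a₄ a₅)) :
    (0 ≤ b₃ ∧ b₃ ≤ Δ) ∧ (0 ≤ b₄ ∧ b₄ ≤ Δ) ∧ (0 ≤ b₅ ∧ b₅ ≤ Δ) := by
  classical
  have hn2 : 2 ≤ n := by omega
  have hu2 : 2 + a₁ + a₂ ≤ n := by omega
  have hu3 : 2 + a₁ + a₂ + a₃ ≤ n := by omega
  have hu4 : 2 + a₁ + a₂ + a₃ + a₄ ≤ n := by omega
  have hu5 : 2 + a₁ + a₂ + a₃ + a₄ + a₅ ≤ n := by omega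
  obtain ⟨i0, hi0⟩ : ∃ i : Fin n, i.val = 0 := ⟨⟨0, by omega⟩, rfl⟩
  obtain ⟨i1, hi1⟩ : ∃ i : Fin n, i.val = 1 := ⟨⟨1, by omega⟩, rfl⟩
  have hr1mem : row1 n a₁ ∈ Ccode n a₁ a₂ a₃ a₄ a₅ :=
    Submodule.subset_span (Set.mem_insert _ _)
  have hr2mem : row2 n a₁ a₂ a₃ a₄ ∈ Ccode n a₁ a₂ a₃ a₄ a₅ :=
    Submodule.subset_span (Set.mem_insert_of_mem _ rfl)
  have hv_mem : ∀ c : F4, row1 n a₁ + c • row2 n a₁ a₂ a₃ a₄ ∈ Ccode n a₁ a₂ a₃ a₄ a₅ :=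
    fun c => Submodule.add_mem _ hr1mem (Submodule.smul_mem _ c hr2mem)
  have hv_ne : ∀ c : F4, row1 n a₁ + c • row2 n a₁ a₂ a₃ a₄ ≠ 0 := by
    intro c h
    have := congrFun h i0
    rw [Pi.add_apply, Pi.smul_apply, smul_eq_mul, row1_val0 hi0, row2_val0 hi0,
      mul_zero, add_zero] at this
    exact one_ne_zero this
  have hr2_ne : row2 n a₁ a₂ a₃ a₄ ≠ 0 := by
    intro h
    have := congrFun h i1
    rw [row2_val1 hi1] at this
    exact one_ne_zero this
  -- block of columns (1,0)ᵀ together with the first column, where row2 vanishes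
  have ha2 : d + (1 + a₂) ≤ n := by
    have hcard : (insert i0 (Finset.univ.filter
        fun i : Fin n => 2 + a₁ ≤ i.val ∧ i.val < 2 + a₁ + a₂)).card = 1 + a₂ := by
      rw [Finset.card_insert_of_notMem (zero_not_blk (by omega) hi0),
        card_filter_Ico n _ _ hu2, Nat.add_sub_cancel_left]
      exact Nat.add_comm _ _
    have := key_bound hmin hr2mem hr2_ne
      (insert i0 (Finset.univ.filter fun i : Fin n => 2 + a₁ ≤ i.val ∧ i.val < 2 + a₁ + a₂)) ?_
    · rwa [hcard] at this
    · intro i hi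
      rcases Finset.mem_insert.mp hi with h | h
      · rw [h]; exact row2_val0 hi0
      · obtain ⟨hl, hu⟩ := (Finset.mem_filter.mp h).2
        exact row2_blk₂ hl hu
  -- block a₃ : row1 + row2 vanishes there
  have ha3 : d + a₃ ≤ n := by
    have := key_bound hmin (hv_mem 1) (hv_ne 1)
      (Finset.univ.filter fun i : Fin n => 2 + a₁ + a₂ ≤ i.val ∧ i.val < 2 + a₁ + a₂ + a₃) ?_
    · rwa [card_filter_Ico n _ _ hu3, Nat.add_sub_cancel_left] at this
    · intro i hi
      obtain ⟨hl, hu⟩ := (Finset.mem_filter.mp hi).2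
      rw [Pi.add_apply, Pi.smul_apply, smul_eq_mul, one_mul,
        row1_val_ge (le_trans (Nat.le_add_right _ _) hl), row2_blk₃ hl hu]
      exact F4.one_add_one
  -- block a₄ : row1 + ω² • row2 vanishes there
  have ha4 : d + a₄ ≤ n := by
    have := key_bound hmin (hv_mem (ω4 ^ 2)) (hv_ne (ω4 ^ 2))
      (Finset.univ.filter fun i : Fin n =>
        2 + a₁ + a₂ + a₃ ≤ i.val ∧ i.val < 2 + a₁ + a₂ + a₃ + a₄) ?_
    · rwa [card_filter_Ico n _ _ hu4, Nat.add_sub_cancel_left] at this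
    · intro i hi
      obtain ⟨hl, hu⟩ := (Finset.mem_filter.mp hi).2
      rw [Pi.add_apply, Pi.smul_apply, smul_eq_mul,
        row1_val_ge (le_trans (le_trans (Nat.le_add_right _ _) (Nat.le_add_right _ _)) hl),
        row2_blk₄ hl hu]
      exact F4.omega_cube₂
  -- block a₅ : row1 + ω • row2 vanishes there
  have ha5 : d + a₅ ≤ n := by
    have := key_bound hmin (hv_mem ω4) (hv_ne ω4)
      (Finset.univ.filter fun i : Fin n =>
        2 + a₁ + a₂ + a₃ + a₄ ≤ i.val ∧ i.val < 2 + a₁ + a₂ + a₃ + a₄ + a₅) ?_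
    · rwa [card_filter_Ico n _ _ hu5, Nat.add_sub_cancel_left] at this
    · intro i hi
      obtain ⟨hl, hu⟩ := (Finset.mem_filter.mp hi).2
      rw [Pi.add_apply, Pi.smul_apply, smul_eq_mul,
        row1_val_ge (le_trans (le_trans (le_trans (Nat.le_add_right _ _)
          (Nat.le_add_right _ _)) (Nat.le_add_right _ _)) hl),
        row2_blk₅ hl]
      exact F4.omega_cube₁
  exact stmt4_arith n d a₁ a₂ a₃ a₄ a₅ b₃ b₄ b₅ Δ hn hd hb₃ hb₄ hb₅ hΔ ha2 ha3 ha4 ha5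
end

section
/- Let n ≥ 2 and k ≥ 1. A quaternary code C ⊆ F₄ⁿ is a Hermitian LCD [n, k] code whose Hermitian dual C^{⊥h} has minimum weight 1 if and only if C is equivalent to the code D* = {(x, 0) : x ∈ D} ⊆ F₄ⁿ for some Hermitian LCD [n−1, k] code D ⊆ F₄^{n−1}. -/
open Finset

/-!
A Hermitian dual vector of weight one is a nonzero multiple of a unit vector `eᵢ`, and `eᵢ`
lies in `C^{⊥h}` exactly when every codeword of `C` vanishes at `i`. Moving that coordinate
to the end writes `C` as `D*`, and `(x, 0)` is Hermitian orthogonal to `D*` iff `x` is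
Hermitian orthogonal to `D`, so `D*` is LCD iff `D` is. Monomial maps preserve dimension and
the Hermitian form (`s s̄ = s³ = 1` for `s ∈ F₄ˣ`), hence the LCD property.
-/

lemma F4.pow_three_eq_one {a : F4} (ha : a ≠ 0) : a ^ 3 = 1 := by
  simpa [F4.card_eq] using FiniteField.pow_card_sub_one_eq_one a ha

lemma mem_hermDual {n : ℕ} {C : Submodule F4 (Fin n → F4)} {x : Fin n → F4} :
    x ∈ hermDual C ↔ ∀ y ∈ C, hermInner x y = 0 := Iff.rfl

lemma isHermLCD_iff {n : ℕ} {C : Submodule F4 (Fin n → F4)} :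
    IsHermLCD C ↔ ∀ x ∈ C, x ∈ hermDual C → x = 0 :=
  disjoint_iff.symm.trans Submodule.disjoint_def

lemma finrank_map_of_injective {R M N : Type*} [Semiring R] [AddCommMonoid M] [Module R M]
    [AddCommMonoid N] [Module R N] {f : M →ₗ[R] N} (hf : Function.Injective f)
    (p : Submodule R M) : Module.finrank R (p.map f) = Module.finrank R p :=
  (Submodule.equivMapOfInjective f hf p).finrank_eq.symm

section Weight

variable {n : ℕ}

lemma wt_single (i : Fin n) {c : F4} (hc : c ≠ 0) : wt (Pi.single i c) = 1 := by
  classical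
  rw [wt, Finset.card_eq_one]
  exact ⟨i, by ext j; by_cases hj : j = i <;> simp [hj, hc]⟩

lemma wt_eq_one_iff {x : Fin n → F4} : wt x = 1 ↔ ∃ i c, c ≠ 0 ∧ x = Pi.single i c := by
  classical
  refine ⟨fun h => ?_, fun ⟨i, c, hc, hx⟩ => hx ▸ wt_single i hc⟩
  obtain ⟨i, hi⟩ := Finset.card_eq_one.mp h
  have hsupp : ∀ j, x j ≠ 0 ↔ j = i := fun j => by
    simpa using Finset.ext_iff.mp hi j
  refine ⟨i, x i, (hsupp i).mpr rfl, funext fun j => ?_⟩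
  by_cases hj : j = i
  · subst hj; simp
  · simpa [hj] using mt (hsupp j).mp hj

lemma hermInner_single_left (i : Fin n) (c : F4) (y : Fin n → F4) :
    hermInner (Pi.single i c) y = c * y i ^ 2 := by
  classical
  rw [hermInner, Finset.sum_eq_single i (fun j _ hj => by simp [hj]) (by simp)]
  simp

lemma single_mem_hermDual_iff {C : Submodule F4 (Fin n → F4)} (i : Fin n) {c : F4}
    (hc : c ≠ 0) : Pi.single i c ∈ hermDual C ↔ ∀ y ∈ C, y i = 0 := by
  simp only [mem_hermDual, hermInner_single_left, mul_eq_zero, hc, false_or,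
    pow_eq_zero_iff two_ne_zero]

lemma hasMinWeight_hermDual_one_iff {C : Submodule F4 (Fin n → F4)} :
    hasMinWeight (hermDual C) 1 ↔ ∃ i, ∀ y ∈ C, y i = 0 := by
  constructor
  · rintro ⟨-, z, hz, -, hwz⟩
    obtain ⟨i, c, hc, rfl⟩ := wt_eq_one_iff.mp hwz
    exact ⟨i, (single_mem_hermDual_iff i hc).mp hz⟩
  · rintro ⟨i, hi⟩
    refine ⟨fun x _ hx => ?_, Pi.single i 1, (single_mem_hermDual_iff i one_ne_zero).mpr hi,
      by simp, wt_single i one_ne_zero⟩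
    obtain ⟨j, hj⟩ := Function.ne_iff.mp hx
    exact Finset.card_pos.mpr ⟨j, by simpa using hj⟩

end Weight

section Monomial

variable {n : ℕ} (σ : Equiv.Perm (Fin n)) {s : Fin n → F4}

@[simp]
lemma monoMap_apply (s x : Fin n → F4) (i : Fin n) : monoMap σ s x i = s i * x (σ i) := rfl

lemma monoMap_injective (hs : ∀ i, s i ≠ 0) : Function.Injective (monoMap σ s) := fun a b h =>
  funext fun j => by
    simpa using mul_left_cancel₀ (hs _) (congrFun h (σ.symm j))

lemma monoMap_surjective (hs : ∀ i, s i ≠ 0) : Function.Surjective (monoMap σ s) := fun y =>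
  ⟨fun j => (s (σ.symm j))⁻¹ * y (σ.symm j), funext fun i => by simp [hs i]⟩

lemma hermInner_monoMap (hs : ∀ i, s i ≠ 0) (x y : Fin n → F4) :
    hermInner (monoMap σ s x) (monoMap σ s y) = hermInner x y := by
  rw [hermInner, hermInner, ← Equiv.sum_comp σ (fun i => x i * y i ^ 2)]
  refine Finset.sum_congr rfl fun i _ => ?_
  calc s i * x (σ i) * (s i * y (σ i)) ^ 2 = s i ^ 3 * (x (σ i) * y (σ i) ^ 2) := by ring
    _ = x (σ i) * y (σ i) ^ 2 := by rw [F4.pow_three_eq_one (hs i), one_mul]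

lemma hermDual_map_monoMap (hs : ∀ i, s i ≠ 0) (C : Submodule F4 (Fin n → F4)) :
    hermDual (C.map (monoMap σ s)) = (hermDual C).map (monoMap σ s) := by
  ext x
  constructor
  · intro hx
    obtain ⟨z, rfl⟩ := monoMap_surjective σ hs x
    refine ⟨z, fun y hy => ?_, rfl⟩
    simpa [hermInner_monoMap σ hs] using hx _ ⟨y, hy, rfl⟩
  · rintro ⟨z, hz, rfl⟩ y ⟨w, hw, rfl⟩
    rw [hermInner_monoMap σ hs]
    exact hz w hw

end Monomial

namespace codeEquiv

variable {n : ℕ} {C C' : Submodule F4 (Fin n → F4)}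

lemma finrank_eq (h : codeEquiv C C') : Module.finrank F4 C = Module.finrank F4 C' := by
  obtain ⟨σ, s, hs, rfl⟩ := h
  exact (finrank_map_of_injective (monoMap_injective σ hs) C).symm

lemma isHermLCD_iff (h : codeEquiv C C') : IsHermLCD C ↔ IsHermLCD C' := by
  obtain ⟨σ, s, hs, rfl⟩ := h
  have hinj := monoMap_injective σ hs
  rw [IsHermLCD, IsHermLCD, hermDual_map_monoMap σ hs, ← Submodule.map_inf _ hinj,
    (Submodule.map_injective_of_injective hinj).eq_iff' (Submodule.map_bot _)]

end codeEquiv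

section ExtendZero

variable {m : ℕ}

lemma extendZero_apply (x : Fin m → F4) : extendZero m x = Fin.snoc x 0 := rfl

lemma extendZero_injective (m : ℕ) : Function.Injective (extendZero m) := fun a b h =>
  funext fun i => by simpa [extendZero_apply] using congrFun h (Fin.castSucc i)

lemma mem_range_extendZero_iff {y : Fin (m + 1) → F4} :
    y ∈ LinearMap.range (extendZero m) ↔ y (Fin.last m) = 0 := by
  refine ⟨?_, fun hy => ⟨Fin.init y, ?_⟩⟩
  · rintro ⟨x, rfl⟩
    simp [extendZero_apply]
  · rw [extendZero_apply, ← hy, Fin.snoc_init_self]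

lemma hermInner_extendZero (x y : Fin m → F4) :
    hermInner (extendZero m x) (extendZero m y) = hermInner x y := by
  simp [hermInner, Fin.sum_univ_castSucc, extendZero_apply]

lemma extendZero_mem_hermDual_map_iff {D : Submodule F4 (Fin m → F4)} {x : Fin m → F4} :
    extendZero m x ∈ hermDual (D.map (extendZero m)) ↔ x ∈ hermDual D := by
  simp only [mem_hermDual, Submodule.mem_map, forall_exists_index, and_imp,
    forall_apply_eq_imp_iff₂, hermInner_extendZero]

lemma isHermLCD_map_extendZero_iff {D : Submodule F4 (Fin m → F4)} :
    IsHermLCD (D.map (extendZero m)) ↔ IsHermLCD D := by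
  simp only [isHermLCD_iff, Submodule.mem_map, forall_exists_index, and_imp,
    forall_apply_eq_imp_iff₂, extendZero_mem_hermDual_map_iff,
    (extendZero_injective m).eq_iff' (map_zero _)]

lemma codeEquiv.exists_forall_apply_eq_zero {C : Submodule F4 (Fin (m + 1) → F4)}
    {D : Submodule F4 (Fin m → F4)} (h : codeEquiv C (D.map (extendZero m))) :
    ∃ i, ∀ y ∈ C, y i = 0 := by
  obtain ⟨σ, s, hs, hmap⟩ := h
  refine ⟨σ (Fin.last m), fun y hy => ?_⟩
  have hlast : monoMap σ s y (Fin.last m) = 0 :=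
    mem_range_extendZero_iff.mp (LinearMap.map_le_range (hmap ▸ Submodule.mem_map_of_mem hy))
  simpa [hs] using hlast

lemma exists_codeEquiv_map_extendZero {C : Submodule F4 (Fin (m + 1) → F4)} {i : Fin (m + 1)}
    (hi : ∀ y ∈ C, y i = 0) : ∃ D : Submodule F4 (Fin m → F4),
      codeEquiv C (D.map (extendZero m)) := by
  let σ := Equiv.swap i (Fin.last m)
  refine ⟨(C.map (monoMap σ 1)).comap (extendZero m), σ, 1, fun _ => one_ne_zero,
    (Submodule.map_comap_eq_self ?_).symm⟩
  rintro _ ⟨y, hy, rfl⟩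
  rw [mem_range_extendZero_iff]
  simpa [σ] using hi y hy

end ExtendZero

theorem stmt8_general (m k : ℕ)
    (C : Submodule F4 (Fin (m + 1) → F4)) :
    (Module.finrank F4 C = k ∧ IsHermLCD C ∧ hasMinWeight (hermDual C) 1) ↔
      ∃ D : Submodule F4 (Fin m → F4),
        Module.finrank F4 D = k ∧ IsHermLCD D ∧
        codeEquiv C (Submodule.map (extendZero m) D) := by
  rw [hasMinWeight_hermDual_one_iff]
  constructor
  · rintro ⟨rfl, hC, i, hi⟩
    obtain ⟨D, hCD⟩ := exists_codeEquiv_map_extendZero hi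
    refine ⟨D, ?_, ?_, hCD⟩
    · rw [hCD.finrank_eq, finrank_map_of_injective (extendZero_injective m)]
    · rwa [← isHermLCD_map_extendZero_iff, ← hCD.isHermLCD_iff]
  · rintro ⟨D, rfl, hD, hCD⟩
    refine ⟨?_, hCD.isHermLCD_iff.mpr (isHermLCD_map_extendZero_iff.mpr hD),
      hCD.exists_forall_apply_eq_zero⟩
    rw [hCD.finrank_eq, finrank_map_of_injective (extendZero_injective m)]

/-- for `n = m + 1 ≥ 2` and `k ≥ 1`, a code `C ⊆ F₄ⁿ` is a Hermitian LCD
`[n, k]` code whose Hermitian dual has minimum weight `1` iff `C` is equivalent to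
`D* = {(x, 0) : x ∈ D}` for some Hermitian LCD `[n - 1, k]` code `D`. -/
theorem stmt8 (m k : ℕ) (hm : 1 ≤ m) (hk : 1 ≤ k)
    (C : Submodule F4 (Fin (m + 1) → F4)) :
    (Module.finrank F4 C = k ∧ IsHermLCD C ∧ hasMinWeight (hermDual C) 1) ↔
      ∃ D : Submodule F4 (Fin m → F4),
        Module.finrank F4 D = k ∧ IsHermLCD D ∧
        codeEquiv C (Submodule.map (extendZero m) D) :=
  stmt8_general m k C
end

section
/- For every integer m ≥ 2, there exist exactly two equivalence classes of optimal Hermitian LCD quaternary [5m+1, 2, 4m] codes; that is, there exist optimal Hermitian LCD [5m+1, 2, 4m] codes C₁ and C₂ that are not equivalent, such that every optimal Hermitian LCD [5m+1, 2, 4m] code is equivalent to C₁ or to C₂. -/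
open Finset

/-!
The columns `(vᵢ, wᵢ)` of a generator matrix of a two-dimensional code `C = ⟨v, w⟩` are either
zero or lie on one of the five points of the projective line `P¹(F₄)`, and these column counts
determine `C` up to equivalence. A change of basis of `C` permutes the five points by an
element of `PGL₂(F₄)`, which acts triply transitively, so the counts may be sorted.

A nonzero codeword vanishes exactly on the zero columns and on the columns of one point. Minimum
weight `4m` in length `5m + 1` therefore leaves no zero column, and the deficiencies
`m + 1 - count` of the five points are natural numbers summing to `4`. As `x³ = 1` on `F₄ˣ`,
the Hermitian Gram matrix only depends on the counts: its determinant is the second elementary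
symmetric function of the deficiencies, taken mod `2`. It is odd exactly for the patterns
`(3, 1, 0, 0, 0)` and `(2, 1, 1, 0, 0)`, which give the two classes; they are told apart by
their largest weights, `4m + 3` and `4m + 2`.
-/

open scoped Classical Matrix

namespace F4

lemma two_eq_zero : (2 : F4) = 0 := CharTwo.two_eq_zero

lemma pow_three_eq_one_s10 {x : F4} (hx : x ≠ 0) : x ^ 3 = 1 := by
  simpa [F4.card_eq] using FiniteField.pow_card_sub_one_eq_one x hx

lemma ω4_ne_zero : ω4 ≠ 0 := by
  intro h
  simpa [h] using ω4_spec

lemma ω4_sq_eq : ω4 ^ 2 = ω4 + 1 := by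
  linear_combination ω4_spec - (ω4 + 1) * two_eq_zero

lemma ω4_ne_one : ω4 ≠ 1 := by
  intro h
  have : (1 : F4) = 0 := by simpa [h, CharTwo.add_self_eq_zero] using ω4_sq_eq
  exact one_ne_zero this

lemma ω4_sq_ne_zero : ω4 ^ 2 ≠ 0 := pow_ne_zero 2 ω4_ne_zero

lemma ω4_sq_ne_one : ω4 ^ 2 ≠ 1 := by
  rw [ω4_sq_eq, Ne, CharTwo.add_eq_iff_eq_add, CharTwo.add_self_eq_zero]
  exact ω4_ne_zero

lemma ω4_sq_ne_ω4 : ω4 ^ 2 ≠ ω4 := by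
  rw [ω4_sq_eq, Ne, add_eq_left]
  exact one_ne_zero

lemma ω4_mul_ω4_sq : ω4 * ω4 ^ 2 = 1 := by
  rw [← pow_succ', pow_three_eq_one_s10 ω4_ne_zero]

lemma ω4_sq_mul_ω4 : ω4 ^ 2 * ω4 = 1 := by
  rw [mul_comm, ω4_mul_ω4_sq]

lemma ω4_sq_sq : (ω4 ^ 2) ^ 2 = ω4 := by
  rw [← pow_mul, show 2 * 2 = 3 + 1 from rfl, pow_succ, pow_three_eq_one_s10 ω4_ne_zero, one_mul]

lemma eq_zero_or_one_or_ω4_or_ω4_sq (x : F4) : x = 0 ∨ x = 1 ∨ x = ω4 ∨ x = ω4 ^ 2 := by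
  have h : x * ((x + 1) * ((x + ω4) * (x + ω4 ^ 2))) = 0 := by
    have h4 : x ^ 4 = x := by simpa [F4.card_eq] using FiniteField.pow_card x
    linear_combination (x ^ 3 + x ^ 2 * ω4 + x * (ω4 - 1)) * ω4_spec + h4
      + x * two_eq_zero
  simp only [mul_eq_zero, CharTwo.add_eq_zero] at h
  tauto

lemma option_cases (P : Option F4) :
    P = none ∨ P = some 0 ∨ P = some 1 ∨ P = some ω4 ∨ P = some (ω4 ^ 2) := by
  rcases P with _ | r
  · exact Or.inl rfl
  · rcases eq_zero_or_one_or_ω4_or_ω4_sq r with rfl | rfl | rfl | rfl <;> simp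

lemma univ_eq : (Finset.univ : Finset F4) = {0, 1, ω4, ω4 ^ 2} := by
  ext x
  simpa using eq_zero_or_one_or_ω4_or_ω4_sq x

lemma sum_univ {M : Type*} [AddCommMonoid M] (f : F4 → M) :
    ∑ r, f r = f 0 + f 1 + f ω4 + f (ω4 ^ 2) := by
  rw [univ_eq, Finset.sum_insert, Finset.sum_insert, Finset.sum_insert, Finset.sum_singleton]
  · abel
  · simpa using ω4_sq_ne_ω4.symm
  · simp [ω4_ne_one.symm, ω4_sq_ne_one.symm]
  · simp [ω4_ne_zero.symm, ω4_sq_ne_zero.symm]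

lemma sum_option (f : Option F4 → ℕ) :
    ∑ P, f P = f none + f (some 0) + f (some 1) + f (some ω4) + f (some (ω4 ^ 2)) := by
  rw [Fintype.sum_option, sum_univ]
  ring

lemma natCast_eq_add_of_add_eq {a α M : ℕ} (h : a + α = M) : (a : F4) = M + α := by
  rw [← h]
  push_cast
  linear_combination (-(α : F4)) * two_eq_zero

end F4

section Columns

/-! `Option F4` models the projective line over `F4`: `some r` is the point `[1 : r]` and
`none` is `[0 : 1]`. The class of a column `(x, y)` is `none` if the column is zero and
`some P` for the point `P` it spans otherwise. -/

noncomputable def colClass (x y : F4) : Option (Option F4) :=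
  if x = 0 then (if y = 0 then none else some none) else some (some (y * x⁻¹))

noncomputable def repFst : Option (Option F4) → F4
  | some (some _) => 1
  | _ => 0

noncomputable def repSnd : Option (Option F4) → F4
  | none => 0
  | some none => 1
  | some (some r) => r

noncomputable def colScale (x y : F4) : F4 := if x = 0 then y else x

lemma colScale_mul_repFst (x y : F4) : colScale x y * repFst (colClass x y) = x := by
  by_cases hx : x = 0 <;> by_cases hy : y = 0 <;> simp [colClass, colScale, repFst, hx, hy]

lemma colScale_mul_repSnd (x y : F4) : colScale x y * repSnd (colClass x y) = y := by
  by_cases hx : x = 0 <;> by_cases hy : y = 0 <;> simp [colClass, colScale, repSnd, hx, hy]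
  field_simp

lemma colScale_ne_zero {x y : F4} (h : colClass x y ≠ none) : colScale x y ≠ 0 := by
  by_cases hx : x = 0 <;> by_cases hy : y = 0 <;> simp_all [colClass, colScale]

lemma colClass_repFst_repSnd (P : Option F4) :
    colClass (repFst (some P)) (repSnd (some P)) = some P := by
  rcases P with _ | r <;> simp [colClass, repFst, repSnd]

/-- The point of the projective line on which the functional `(x, y) ↦ a x + b y` vanishes. -/
noncomputable def kerPoint (a b : F4) : Option F4 := if b = 0 then none else some (a * b⁻¹)

lemma kerPoint_surjective (P : Option F4) :
    ∃ a b : F4, ¬(a = 0 ∧ b = 0) ∧ kerPoint a b = P := by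
  rcases P with _ | r
  · exact ⟨1, 0, by simp, by simp [kerPoint]⟩
  · exact ⟨r, 1, by simp, by simp [kerPoint]⟩

lemma mul_add_mul_eq_zero_iff {a b : F4} (hab : ¬(a = 0 ∧ b = 0)) (x y : F4) :
    a * x + b * y = 0 ↔ colClass x y = none ∨ colClass x y = some (kerPoint a b) := by
  rw [CharTwo.add_eq_zero]
  by_cases hx : x = 0 <;> by_cases hy : y = 0 <;> by_cases hb : b = 0 <;>
    simp_all [colClass, kerPoint]
  all_goals field_simp
  exact eq_comm

variable {n : ℕ}

noncomputable def colCount (v w : Fin n → F4) (k : Option (Option F4)) : ℕ :=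
  #{i | colClass (v i) (w i) = k}

noncomputable def pointCount (v w : Fin n → F4) (P : Option F4) : ℕ := colCount v w (some P)

lemma colCount_none_add_pointCount_sum (v w : Fin n → F4) :
    colCount v w none + pointCount v w none + pointCount v w (some 0) + pointCount v w (some 1) +
      pointCount v w (some ω4) + pointCount v w (some (ω4 ^ 2)) = n := by
  have h := Finset.card_eq_sum_card_fiberwise (s := Finset.univ) (t := Finset.univ)
    (f := fun i => colClass (v i) (w i)) (fun i _ => Finset.mem_univ _)
  rw [Finset.card_univ, Fintype.card_fin, Fintype.sum_option, Fintype.sum_option,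
    F4.sum_univ] at h
  simp only [pointCount, colCount]
  omega

lemma wt_smul_add_smul (v w : Fin n → F4) {a b : F4} (hab : ¬(a = 0 ∧ b = 0)) :
    wt (a • v + b • w) = n - (colCount v w none + pointCount v w (kerPoint a b)) := by
  set S : Finset (Fin n) := {i | colClass (v i) (w i) = none}
  set T : Finset (Fin n) := {i | colClass (v i) (w i) = some (kerPoint a b)}
  have hzero : ({i | (a • v + b • w) i = 0} : Finset (Fin n)) = S ∪ T := by
    ext i
    simp [S, T, mul_add_mul_eq_zero_iff hab]
  have hdisj : Disjoint S T := by
    simp +contextual [S, T, Finset.disjoint_left]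
  have hsplit := Finset.card_filter_add_card_filter_not (s := Finset.univ)
    (fun i => (a • v + b • w) i = 0)
  rw [hzero, Finset.card_union_of_disjoint hdisj, Finset.card_univ, Fintype.card_fin] at hsplit
  have hwt : wt (a • v + b • w) = #{i | ¬(a • v + b • w) i = 0} := rfl
  have hS : colCount v w none = #S := rfl
  have hT : pointCount v w (kerPoint a b) = #T := rfl
  omega

end Columns

section Gram

variable {n : ℕ}

lemma hermInner_smul_add_smul_left (v w y : Fin n → F4) (a b : F4) :
    hermInner (a • v + b • w) y = a * hermInner v y + b * hermInner w y := by
  simp only [hermInner, Finset.mul_sum, ← Finset.sum_add_distrib]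
  refine Finset.sum_congr rfl fun i _ => ?_
  simp only [Pi.add_apply, Pi.smul_apply, smul_eq_mul]
  ring

lemma hermInner_smul_add_smul_right (x v w : Fin n → F4) (c d : F4) :
    hermInner x (c • v + d • w) = c ^ 2 * hermInner x v + d ^ 2 * hermInner x w := by
  simp only [hermInner, Finset.mul_sum, ← Finset.sum_add_distrib]
  refine Finset.sum_congr rfl fun i _ => ?_
  simp only [Pi.add_apply, Pi.smul_apply, smul_eq_mul, CharTwo.add_sq]
  ring

lemma mem_hermDual_span_pair {v w x : Fin n → F4} :
    x ∈ hermDual (Submodule.span F4 {v, w}) ↔ hermInner x v = 0 ∧ hermInner x w = 0 := by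
  refine ⟨fun h => ⟨h v (Submodule.subset_span (by simp)), h w (Submodule.subset_span (by simp))⟩,
    fun ⟨hv, hw⟩ y hy => ?_⟩
  obtain ⟨c, d, rfl⟩ := Submodule.mem_span_pair.mp hy
  simp [hermInner_smul_add_smul_right, hv, hw]

/-- The scalars `colScale` cancel since `s ^ 3 = 1` for `s ≠ 0`. -/
lemma hermInner_eq_sum_colCount (v w x y : Fin n → F4) (P Q : Option (Option F4) → F4)
    (hP : P none = 0) (hx : ∀ i, x i = colScale (v i) (w i) * P (colClass (v i) (w i)))
    (hy : ∀ i, y i = colScale (v i) (w i) * Q (colClass (v i) (w i))) :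
    hermInner x y = ∑ k, colCount v w k • (P k * Q k ^ 2) := by
  have hterm : ∀ i, x i * y i ^ 2 = P (colClass (v i) (w i)) * Q (colClass (v i) (w i)) ^ 2 := by
    intro i
    rw [hx, hy]
    by_cases h : colClass (v i) (w i) = none
    · simp [h, hP]
    · linear_combination (P (colClass (v i) (w i)) * Q (colClass (v i) (w i)) ^ 2) *
        F4.pow_three_eq_one_s10 (colScale_ne_zero h)
  simp only [hermInner, hterm, colCount, Finset.card_eq_sum_ones, Finset.sum_smul, one_smul]
  rw [← Finset.sum_fiberwise Finset.univ (fun i => colClass (v i) (w i))]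
  refine Finset.sum_congr rfl fun k _ => Finset.sum_congr rfl fun i hi => ?_
  rw [(Finset.mem_filter.mp hi).2]

def esymmTwo {R : Type*} [CommSemiring R] (a b c d e : R) : R :=
  a * b + a * c + a * d + a * e + b * c + b * d + b * e + c * d + c * e + d * e

lemma natCast_esymmTwo {R : Type*} [CommSemiring R] (a b c d e : ℕ) :
    ((esymmTwo a b c d e : ℕ) : R) = esymmTwo (a : R) b c d e := by
  simp [esymmTwo]

lemma esymmTwo_add_left {R : Type*} [CommRing R] [CharP R 2] (t a b c d e : R) :
    esymmTwo (t + a) (t + b) (t + c) (t + d) (t + e) = esymmTwo a b c d e := by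
  unfold esymmTwo
  linear_combination (5 * t ^ 2 + 2 * t * (a + b + c + d + e)) * CharTwo.two_eq_zero (R := R)

lemma esymmTwo_natCast_eq_of_add_eq {M a b c d e α β γ δ ε : ℕ} (ha : a + α = M)
    (hb : b + β = M) (hc : c + γ = M) (hd : d + δ = M) (he : e + ε = M) :
    esymmTwo (a : F4) b c d e = (esymmTwo α β γ δ ε : ℕ) := by
  rw [F4.natCast_eq_add_of_add_eq ha, F4.natCast_eq_add_of_add_eq hb,
    F4.natCast_eq_add_of_add_eq hc, F4.natCast_eq_add_of_add_eq hd,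
    F4.natCast_eq_add_of_add_eq he, esymmTwo_add_left, natCast_esymmTwo]

noncomputable def gram (v w : Fin n → F4) : Matrix (Fin 2) (Fin 2) F4 :=
  !![hermInner v v, hermInner v w; hermInner w v, hermInner w w]

lemma det_gram (v w : Fin n → F4) :
    (gram v w).det = esymmTwo (pointCount v w none : F4) (pointCount v w (some 0))
      (pointCount v w (some 1)) (pointCount v w (some ω4)) (pointCount v w (some (ω4 ^ 2))) := by
  have hv := fun i => (colScale_mul_repFst (v i) (w i)).symm
  have hw := fun i => (colScale_mul_repSnd (v i) (w i)).symm
  set A : F4 := (pointCount v w none : F4)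
  set B : F4 := (pointCount v w (some 0) : F4)
  set C : F4 := (pointCount v w (some 1) : F4)
  set D : F4 := (pointCount v w (some ω4) : F4)
  set E : F4 := (pointCount v w (some (ω4 ^ 2)) : F4)
  have hvv : hermInner v v = B + C + D + E := by
    rw [hermInner_eq_sum_colCount v w v v _ _ rfl hv hv]
    simp [Fintype.sum_option, F4.sum_univ, repFst, B, C, D, E, pointCount]
  have hww : hermInner w w = A + C + D + E := by
    rw [hermInner_eq_sum_colCount v w w w _ _ rfl hw hw]
    simp [Fintype.sum_option, F4.sum_univ, repSnd, A, C, D, E, pointCount, F4.ω4_mul_ω4_sq,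
      F4.ω4_sq_sq, F4.ω4_sq_mul_ω4, add_assoc]
  have hvw : hermInner v w = C + D * ω4 ^ 2 + E * ω4 := by
    rw [hermInner_eq_sum_colCount v w v w _ _ rfl hv hw]
    simp [Fintype.sum_option, F4.sum_univ, repFst, repSnd, C, D, E, pointCount, F4.ω4_sq_sq]
  have hwv : hermInner w v = C + D * ω4 + E * ω4 ^ 2 := by
    rw [hermInner_eq_sum_colCount v w w v _ _ rfl hw hv]
    simp [Fintype.sum_option, F4.sum_univ, repFst, repSnd, C, D, E, pointCount]
  rw [gram, Matrix.det_fin_two_of, hvv, hww, hvw, hwv, esymmTwo]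
  linear_combination (E ^ 2 - E ^ 2 * ω4 - D * E + D * E * ω4 - D * E * ω4 ^ 2 + D ^ 2
    - D ^ 2 * ω4 - C * E - C * D) * ω4_spec + (C * D + C * E + D * E) * F4.two_eq_zero

lemma vecMul_gram (v w : Fin n → F4) (a b : F4) :
    ![a, b] ᵥ* gram v w = ![hermInner (a • v + b • w) v, hermInner (a • v + b • w) w] := by
  ext j
  fin_cases j <;> simp [gram, hermInner_smul_add_smul_left]

lemma isHermLCD_span_pair_iff {v w : Fin n → F4} (hind : LinearIndependent F4 ![v, w]) :
    IsHermLCD (Submodule.span F4 {v, w}) ↔ (gram v w).det ≠ 0 := by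
  rw [IsHermLCD, ne_eq, ← Matrix.exists_vecMul_eq_zero_iff, Submodule.eq_bot_iff]
  constructor
  · rintro hlcd ⟨c, hc, hker⟩
    have hcx : c = ![c 0, c 1] := by ext j; fin_cases j <;> rfl
    rw [hcx, vecMul_gram] at hker
    have hx := hlcd (c 0 • v + c 1 • w) (Submodule.mem_inf.mpr
      ⟨Submodule.mem_span_pair.mpr ⟨_, _, rfl⟩,
        mem_hermDual_span_pair.mpr ⟨congrFun hker 0, congrFun hker 1⟩⟩)
    obtain ⟨h0, h1⟩ := LinearIndependent.pair_iff.mp hind _ _ hx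
    exact hc (by rw [hcx, h0, h1]; ext j; fin_cases j <;> rfl)
  · intro hdet x hx
    obtain ⟨hxC, hxD⟩ := Submodule.mem_inf.mp hx
    obtain ⟨a, b, rfl⟩ := Submodule.mem_span_pair.mp hxC
    by_contra hx0
    refine hdet ⟨![a, b], fun hab => hx0 ?_, ?_⟩
    · simp [show a = 0 from congrFun hab 0, show b = 0 from congrFun hab 1]
    · obtain ⟨h1, h2⟩ := mem_hermDual_span_pair.mp hxD
      rw [vecMul_gram, h1, h2]
      ext j; fin_cases j <;> rfl

end Gram

section Equivalence

variable {n : ℕ}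

lemma codeEquiv_of_colCount_eq {v w v' w' : Fin n → F4}
    (h : ∀ k, colCount v w k = colCount v' w' k) :
    codeEquiv (Submodule.span F4 {v, w}) (Submodule.span F4 {v', w'}) := by
  set c := fun i => colClass (v i) (w i)
  set c' := fun i => colClass (v' i) (w' i)
  have hcard : ∀ k, Fintype.card {i // c' i = k} = Fintype.card {i // c i = k} := by
    intro k
    rw [Fintype.card_subtype, Fintype.card_subtype]
    exact (h k).symm
  let σ : Equiv.Perm (Fin n) := (Equiv.sigmaFiberEquiv c').symm.trans
    ((Equiv.sigmaCongrRight fun k => Fintype.equivOfCardEq (hcard k)).trans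
      (Equiv.sigmaFiberEquiv c))
  have hσ : ∀ i, c (σ i) = c' i := fun i => (Fintype.equivOfCardEq (hcard (c' i)) ⟨i, rfl⟩).2
  let s : Fin n → F4 := fun i =>
    if c' i = none then 1 else colScale (v' i) (w' i) * (colScale (v (σ i)) (w (σ i)))⁻¹
  have hσ0 : ∀ i, c' i ≠ none → c (σ i) ≠ none := fun i h0 => hσ i ▸ h0
  have hs : ∀ i, s i ≠ 0 := by
    intro i
    by_cases h0 : c' i = none
    · simp [s, h0]
    · simp only [s, if_neg h0]
      exact mul_ne_zero (colScale_ne_zero h0) (inv_ne_zero (colScale_ne_zero (hσ0 i h0)))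
  have hmap : ∀ (x x' : Fin n → F4) (R : Option (Option F4) → F4), R none = 0 →
      (∀ i, x i = colScale (v i) (w i) * R (c i)) →
      (∀ i, x' i = colScale (v' i) (w' i) * R (c' i)) → monoMap σ s x = x' := by
    intro x x' R hR hx hx'
    funext i
    change s i * x (σ i) = x' i
    rw [hx, hx', hσ]
    by_cases h0 : c' i = none
    · simp [h0, hR]
    · have := colScale_ne_zero (hσ0 i h0)
      simp only [s, if_neg h0]
      field_simp
  refine ⟨σ, s, hs, ?_⟩
  rw [Submodule.map_span, Set.image_pair,
    hmap v v' repFst rfl (fun i => (colScale_mul_repFst _ _).symm)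
      (fun i => (colScale_mul_repFst _ _).symm),
    hmap w w' repSnd rfl (fun i => (colScale_mul_repSnd _ _).symm)
      (fun i => (colScale_mul_repSnd _ _).symm)]

def IsBasisChange (v w v' w' : Fin n → F4) (g : Equiv.Perm (Option F4)) : Prop :=
  Submodule.span F4 {v', w'} = Submodule.span F4 {v, w} ∧
    ∀ i, colClass (v' i) (w' i) = Option.map g (colClass (v i) (w i))

namespace IsBasisChange

variable {v w v' w' v'' w'' : Fin n → F4} {g g' : Equiv.Perm (Option F4)}

lemma refl (v w : Fin n → F4) : IsBasisChange v w v w 1 :=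
  ⟨rfl, fun i => by simp⟩

lemma trans (h : IsBasisChange v w v' w' g) (h' : IsBasisChange v' w' v'' w'' g') :
    IsBasisChange v w v'' w'' (g.trans g') :=
  ⟨h'.1.trans h.1, fun i => by rw [h'.2, h.2, Option.map_map]; rfl⟩

lemma pointCount_apply (h : IsBasisChange v w v' w' g) (P : Option F4) :
    pointCount v' w' (g P) = pointCount v w P := by
  simp only [pointCount, colCount, h.2]
  congr 1
  ext i
  simp

end IsBasisChange

lemma span_pair_eq_of_mem {R M : Type*} [Semiring R] [AddCommMonoid M] [Module R M]
    {v w v' w' : M} (hv : v ∈ Submodule.span R {v', w'}) (hw : w ∈ Submodule.span R {v', w'})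
    (hv' : v' ∈ Submodule.span R {v, w}) (hw' : w' ∈ Submodule.span R {v, w}) :
    Submodule.span R {v', w'} = Submodule.span R {v, w} := by
  apply le_antisymm <;> rw [Submodule.span_le, Set.insert_subset_iff, Set.singleton_subset_iff]
  exacts [⟨hv', hw'⟩, ⟨hv, hw⟩]

lemma isBasisChange_add_smul (v w : Fin n → F4) (q : F4) :
    IsBasisChange v w v (w + q • v) (Equiv.optionCongr (Equiv.addRight q)) := by
  refine ⟨span_pair_eq_of_mem ?_ ?_ ?_ ?_, fun i => ?_⟩
  · exact Submodule.subset_span (by simp)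
  · simpa using Submodule.mem_span_pair.mpr ⟨-q, 1, by simp [add_comm]⟩
  · exact Submodule.subset_span (by simp)
  · exact Submodule.mem_span_pair.mpr ⟨q, 1, by simp [add_comm]⟩
  · by_cases hv : v i = 0 <;> by_cases hw : w i = 0 <;> simp [colClass, hv, hw, add_mul]

lemma isBasisChange_smul (v w : Fin n → F4) {a : F4} (ha : a ≠ 0) :
    IsBasisChange v w v (a • w) (Equiv.optionCongr (Equiv.mulLeft₀ a ha)) := by
  refine ⟨span_pair_eq_of_mem ?_ ?_ ?_ ?_, fun i => ?_⟩
  · exact Submodule.subset_span (by simp)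
  · simpa [smul_smul, inv_mul_cancel₀ ha] using
      Submodule.smul_mem _ a⁻¹ (Submodule.subset_span (by simp) : a • w ∈ _)
  · exact Submodule.subset_span (by simp)
  · exact Submodule.smul_mem _ a (Submodule.subset_span (by simp))
  · by_cases hv : v i = 0 <;> by_cases hw : w i = 0 <;> simp [colClass, hv, hw, ha, mul_assoc]

noncomputable def projInv : Option F4 → Option F4
  | none => some 0
  | some r => if r = 0 then none else some r⁻¹

lemma projInv_involutive : Function.Involutive projInv := by
  rintro (_ | r)
  · simp [projInv]
  · by_cases hr : r = 0 <;> simp [projInv, hr]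

lemma isBasisChange_swap (v w : Fin n → F4) :
    IsBasisChange v w w v projInv_involutive.toPerm := by
  refine ⟨Set.pair_comm _ _ ▸ rfl, fun i => ?_⟩
  by_cases hv : v i = 0 <;> by_cases hw : w i = 0 <;> simp [colClass, projInv, hv, hw]

lemma exists_isBasisChange_eq_none (v w : Fin n → F4) (P : Option F4) :
    ∃ v' w' g, IsBasisChange v w v' w' g ∧ g P = none := by
  rcases P with _ | p
  · exact ⟨v, w, 1, IsBasisChange.refl v w, rfl⟩
  · refine ⟨_, _, _, (isBasisChange_add_smul v w p).trans (isBasisChange_swap _ _), ?_⟩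
    simp [projInv, CharTwo.add_self_eq_zero]

lemma exists_isBasisChange_fix_none (v w : Fin n → F4) {q r : F4} (hqr : q ≠ r) :
    ∃ v' w' g, IsBasisChange v w v' w' g ∧ g none = none ∧ g (some q) = some 0 ∧
      g (some r) = some 1 := by
  have hrq : r + q ≠ 0 := by rwa [Ne, CharTwo.add_eq_zero, eq_comm]
  refine ⟨_, _, _, (isBasisChange_add_smul v w q).trans
    (isBasisChange_smul _ _ (inv_ne_zero hrq)), ?_⟩
  simp [CharTwo.add_self_eq_zero, inv_mul_cancel₀ hrq]

/-- `PGL₂(F₄)` acts triply transitively on the projective line. -/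
lemma exists_isBasisChange (v w : Fin n → F4) {P Q R : Option F4} (hPQ : P ≠ Q) (hPR : P ≠ R)
    (hQR : Q ≠ R) : ∃ v' w' g, IsBasisChange v w v' w' g ∧ g P = none ∧ g Q = some 0 ∧
      g R = some 1 := by
  obtain ⟨v₁, w₁, g₁, h₁, hP⟩ := exists_isBasisChange_eq_none v w P
  obtain ⟨q, hq⟩ : ∃ q, g₁ Q = some q :=
    Option.ne_none_iff_exists'.mp (hP ▸ g₁.injective.ne hPQ.symm)
  obtain ⟨r, hr⟩ : ∃ r, g₁ R = some r :=
    Option.ne_none_iff_exists'.mp (hP ▸ g₁.injective.ne hPR.symm)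
  have hqr : q ≠ r := fun h => hQR (g₁.injective (by rw [hq, hr, h]))
  obtain ⟨v₂, w₂, g₂, h₂, h0, h1, h2⟩ := exists_isBasisChange_fix_none v₁ w₁ hqr
  exact ⟨v₂, w₂, _, h₁.trans h₂, by simp [hP, h0], by simp [hq, h1], by simp [hr, h2]⟩

lemma exists_three_smallest {α : Type*} [Fintype α] (hα : 3 ≤ Fintype.card α) (f : α → ℕ) :
    ∃ P Q R, P ≠ Q ∧ P ≠ R ∧ Q ≠ R ∧ (∀ x, f P ≤ f x) ∧ (∀ x, x ≠ P → f Q ≤ f x) ∧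
      ∀ x, x ≠ P → x ≠ Q → f R ≤ f x := by
  have h1 : (Finset.univ : Finset α).Nonempty := Finset.card_pos.mp (by simp; omega)
  obtain ⟨P, -, hP⟩ := Finset.exists_min_image Finset.univ f h1
  have h2 : (Finset.univ.erase P).Nonempty := Finset.card_pos.mp (by simp; omega)
  obtain ⟨Q, hQ, hQmin⟩ := Finset.exists_min_image (Finset.univ.erase P) f h2
  have h3 : ((Finset.univ.erase P).erase Q).Nonempty :=
    Finset.card_pos.mp (by rw [Finset.card_erase_of_mem hQ]; simp; omega)
  obtain ⟨R, hR, hRmin⟩ := Finset.exists_min_image ((Finset.univ.erase P).erase Q) f h3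
  simp only [Finset.mem_erase, Finset.mem_univ, and_true] at hQ hR hQmin hRmin
  exact ⟨P, Q, R, Ne.symm hQ, Ne.symm hR.2, Ne.symm hR.1, fun x => hP x (Finset.mem_univ _),
    hQmin, fun x hxP hxQ => hRmin x ⟨hxQ, hxP⟩⟩

lemma exists_span_pair_eq_sorted (v w : Fin n → F4) :
    ∃ v' w', Submodule.span F4 {v', w'} = Submodule.span F4 {v, w} ∧
      pointCount v' w' none ≤ pointCount v' w' (some 0) ∧
      pointCount v' w' (some 0) ≤ pointCount v' w' (some 1) ∧
      ∀ r, r ≠ 0 → r ≠ 1 → pointCount v' w' (some 1) ≤ pointCount v' w' (some r) := by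
  obtain ⟨P, Q, R, hPQ, hPR, hQR, hP, hQ, hR⟩ :=
    exists_three_smallest (by simp [F4.card_eq]) (pointCount v w)
  obtain ⟨v', w', g, hg, gP, gQ, gR⟩ := exists_isBasisChange v w hPQ hPR hQR
  have hcount := hg.pointCount_apply
  refine ⟨v', w', hg.1, ?_, ?_, fun r hr0 hr1 => ?_⟩
  · rw [← gP, ← gQ, hcount, hcount]
    exact hP Q
  · rw [← gQ, ← gR, hcount, hcount]
    exact hQ R hPR.symm
  · obtain ⟨x, hx⟩ := g.surjective (some r)
    rw [← gR, ← hx, hcount, hcount]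
    exact hR x (by rintro rfl; simp [gP] at hx) (by rintro rfl; simp [gQ, eq_comm, hr0] at hx)

end Equivalence

section Weights

variable {n : ℕ}

lemma wt_eq_zero_iff {x : Fin n → F4} : wt x = 0 ↔ x = 0 := by
  simp [wt, Finset.filter_eq_empty_iff, funext_iff]

lemma wt_monoMap {σ : Equiv.Perm (Fin n)} {s : Fin n → F4} (hs : ∀ i, s i ≠ 0)
    (x : Fin n → F4) : wt (monoMap σ s x) = wt x := by
  unfold wt
  rw [← Finset.card_map σ.toEmbedding]
  congr 1
  ext j
  simp [monoMap, hs]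

lemma not_codeEquiv_of_wt {C C' : Submodule F4 (Fin n → F4)} {x : Fin n → F4} (hx : x ∈ C)
    (hC' : ∀ y ∈ C', wt y < wt x) : ¬codeEquiv C C' := by
  rintro ⟨σ, s, hs, rfl⟩
  exact (hC' _ (Submodule.mem_map_of_mem hx)).ne (wt_monoMap hs x)

lemma exists_mem_span_pair_wt_eq (v w : Fin n → F4) (P : Option F4) :
    ∃ x ∈ Submodule.span F4 {v, w}, wt x = n - (colCount v w none + pointCount v w P) := by
  obtain ⟨a, b, hab, rfl⟩ := kerPoint_surjective P
  exact ⟨_, Submodule.mem_span_pair.mpr ⟨a, b, rfl⟩, wt_smul_add_smul v w hab⟩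

lemma linearIndependent_of_colCount_add_pointCount_lt {v w : Fin n → F4}
    (h : ∀ P, colCount v w none + pointCount v w P < n) : LinearIndependent F4 ![v, w] := by
  refine LinearIndependent.pair_iff.mpr fun a b hab => ?_
  by_contra hab0
  have := wt_smul_add_smul v w hab0
  rw [hab, wt_eq_zero_iff.mpr rfl] at this
  have := h (kerPoint a b)
  omega

lemma finrank_span_pair_eq_two_iff {v w : Fin n → F4} :
    Module.finrank F4 (Submodule.span F4 {v, w}) = 2 ↔ LinearIndependent F4 ![v, w] := by
  rw [linearIndependent_iff_card_eq_finrank_span, Matrix.range_cons_cons_empty, Set.finrank,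
    Fintype.card_fin, eq_comm]

lemma exists_span_pair_of_finrank_eq_two {C : Submodule F4 (Fin n → F4)}
    (h : Module.finrank F4 C = 2) : ∃ v w, C = Submodule.span F4 {v, w} := by
  let b := (Module.finBasis F4 C).reindex (finCongr h)
  have hb : (C.subtype ∘ b : Fin 2 → Fin n → F4) = ![(b 0 : Fin n → F4), b 1] := by
    ext j : 1
    fin_cases j <;> rfl
  refine ⟨b 0, b 1, ?_⟩
  rw [← Matrix.range_cons_cons_empty (b 0 : Fin n → F4) (b 1) ![], ← hb, Set.range_comp,
    ← Submodule.map_span, b.span_eq, Submodule.map_subtype_top]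

lemma colCount_add_pointCount_add_le {v w : Fin n → F4} (hind : LinearIndependent F4 ![v, w])
    {d : ℕ} (hd : 0 < d) (hmin : ∀ x ∈ Submodule.span F4 {v, w}, x ≠ 0 → d ≤ wt x)
    (P : Option F4) : colCount v w none + pointCount v w P + d ≤ n := by
  obtain ⟨a, b, hab, rfl⟩ := kerPoint_surjective P
  have := hmin _ (Submodule.mem_span_pair.mpr ⟨a, b, rfl⟩)
    (fun h => hab (LinearIndependent.pair_iff.mp hind a b h))
  rw [wt_smul_add_smul v w hab] at this
  omega

lemma wt_le_of_le_colCount_add_pointCount {v w : Fin n → F4} {M : ℕ}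
    (hge : ∀ P, M ≤ colCount v w none + pointCount v w P) :
    ∀ x ∈ Submodule.span F4 {v, w}, wt x ≤ n - M := by
  intro x hx
  obtain ⟨a, b, rfl⟩ := Submodule.mem_span_pair.mp hx
  by_cases hab : a = 0 ∧ b = 0
  · simp [hab.1, hab.2, wt_eq_zero_iff.mpr]
  · have := hge (kerPoint a b)
    rw [wt_smul_add_smul v w hab]
    omega

lemma hasMinWeight_span_pair {v w : Fin n → F4} {M : ℕ} (hMn : M < n)
    (hle : ∀ P, colCount v w none + pointCount v w P ≤ M)
    (heq : ∃ P, colCount v w none + pointCount v w P = M) :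
    hasMinWeight (Submodule.span F4 {v, w}) (n - M) := by
  constructor
  · intro x hx hx0
    obtain ⟨a, b, rfl⟩ := Submodule.mem_span_pair.mp hx
    have hab : ¬(a = 0 ∧ b = 0) := by rintro ⟨rfl, rfl⟩; simp at hx0
    have := hle (kerPoint a b)
    rw [wt_smul_add_smul v w hab]
    omega
  · obtain ⟨P, hP⟩ := heq
    obtain ⟨x, hx, hwt⟩ := exists_mem_span_pair_wt_eq v w P
    rw [hP] at hwt
    exact ⟨x, hx, fun h => by rw [h, wt_eq_zero_iff.mpr rfl] at hwt; omega, hwt⟩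

lemma exists_pointCount_eq (N : Option F4 → ℕ) (hN : ∑ P, N P = n) :
    ∃ v w : Fin n → F4, colCount v w none = 0 ∧ ∀ P, pointCount v w P = N P := by
  let e : Fin n ≃ Σ P, Fin (N P) := (Fintype.equivFinOfCardEq (by simp [hN])).symm
  refine ⟨fun i => repFst (some (e i).1), fun i => repSnd (some (e i).1), ?_, fun P => ?_⟩
  · simp [colCount, colClass_repFst_repSnd]
  · simp only [pointCount, colCount, colClass_repFst_repSnd, Option.some.injEq]
    rw [← Fintype.card_subtype,
      Fintype.card_congr (e.subtypeEquivOfSubtype (p := fun s => s.1 = P)),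
      ← Fintype.card_fin (N P)]
    exact Fintype.card_congr (Equiv.sigmaSubtype P)

end Weights

section Classification

lemma deficiency_cases {α β γ δ ε : ℕ} (hsum : α + β + γ + δ + ε = 4) (hβ : β ≤ α)
    (hγ : γ ≤ β) (hδ : δ ≤ γ) (hε : ε ≤ γ) (hodd : ¬2 ∣ esymmTwo α β γ δ ε) :
    (α = 3 ∧ β = 1 ∧ γ = 0 ∧ δ = 0 ∧ ε = 0) ∨ (α = 2 ∧ β = 1 ∧ γ = 1 ∧ δ = 0 ∧ ε = 0) := by
  have : α ≤ 4 := by omega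
  have : β ≤ 2 := by omega
  have : γ ≤ 1 := by omega
  interval_cases α <;> interval_cases β <;> interval_cases γ <;> interval_cases δ <;>
    interval_cases ε <;> simp_all [esymmTwo]

lemma counts_eq_of_esymmTwo_ne_zero {m n₀ a b c e f : ℕ}
    (hsum : n₀ + a + b + c + e + f = 5 * m + 1) (ha : n₀ + a ≤ m + 1) (hb : n₀ + b ≤ m + 1)
    (hc : n₀ + c ≤ m + 1) (he : n₀ + e ≤ m + 1) (hf : n₀ + f ≤ m + 1)
    (hab : a ≤ b) (hbc : b ≤ c) (hce : c ≤ e) (hcf : c ≤ f)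
    (hdet : esymmTwo (a : F4) b c e f ≠ 0) :
    n₀ = 0 ∧ ((a + 3 = m + 1 ∧ b = m ∧ c = m + 1 ∧ e = m + 1 ∧ f = m + 1) ∨
      (a + 2 = m + 1 ∧ b = m ∧ c = m ∧ e = m + 1 ∧ f = m + 1)) := by
  have hn₀ : n₀ = 0 := by
    by_contra hn₀
    obtain ⟨hb, hc, he, hf⟩ : b = a ∧ c = a ∧ e = a ∧ f = a := by omega
    rw [hb, hc, he, hf] at hdet
    exact hdet (by unfold esymmTwo; linear_combination (5 * (a : F4) ^ 2) * F4.two_eq_zero)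
  subst hn₀
  obtain ⟨α, hα⟩ : ∃ α, a + α = m + 1 := ⟨m + 1 - a, by omega⟩
  obtain ⟨β, hβ⟩ : ∃ β, b + β = m + 1 := ⟨m + 1 - b, by omega⟩
  obtain ⟨γ, hγ⟩ : ∃ γ, c + γ = m + 1 := ⟨m + 1 - c, by omega⟩
  obtain ⟨δ, hδ⟩ : ∃ δ, e + δ = m + 1 := ⟨m + 1 - e, by omega⟩
  obtain ⟨ε, hε⟩ : ∃ ε, f + ε = m + 1 := ⟨m + 1 - f, by omega⟩
  rw [esymmTwo_natCast_eq_of_add_eq hα hβ hγ hδ hε, Ne, CharP.cast_eq_zero_iff F4 2] at hdet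
  refine ⟨rfl, ?_⟩
  rcases deficiency_cases (by omega) (by omega) (by omega) (by omega) (by omega) hdet with
    h | h <;> omega

noncomputable def countsA (m : ℕ) (P : Option F4) : ℕ :=
  if P = none then m - 2 else if P = some 0 then m else m + 1

noncomputable def countsB (m : ℕ) (P : Option F4) : ℕ :=
  if P = none then m - 1 else if P = some 0 ∨ P = some 1 then m else m + 1

lemma sum_countsA {m : ℕ} (hm : 2 ≤ m) : ∑ P, countsA m P = 5 * m + 1 := by
  simp only [F4.sum_option, countsA]
  simp [F4.ω4_ne_zero]
  omega

lemma sum_countsB {m : ℕ} (hm : 1 ≤ m) : ∑ P, countsB m P = 5 * m + 1 := by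
  simp only [F4.sum_option, countsB]
  simp [F4.ω4_ne_zero, F4.ω4_ne_one, CharTwo.neg_eq]
  omega

lemma optimalDist_five_mul_add_one (m : ℕ) : optimalDist (5 * m + 1) = 4 * m := by
  rw [optimalDist, if_pos (by omega)]
  omega

lemma isOptimalLCD_of_pointCount {m : ℕ} (hm : 1 ≤ m) {v w : Fin (5 * m + 1) → F4}
    (h0 : colCount v w none = 0) (hle : ∀ P, pointCount v w P ≤ m + 1)
    (hmax : ∃ P, pointCount v w P = m + 1)
    (hdet : esymmTwo (pointCount v w none : F4) (pointCount v w (some 0))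
      (pointCount v w (some 1)) (pointCount v w (some ω4)) (pointCount v w (some (ω4 ^ 2))) ≠ 0) :
    IsOptimalLCD (5 * m + 1) (4 * m) (Submodule.span F4 {v, w}) := by
  have hind : LinearIndependent F4 ![v, w] :=
    linearIndependent_of_colCount_add_pointCount_lt fun P => by rw [h0]; have := hle P; omega
  refine ⟨finrank_span_pair_eq_two_iff.mpr hind, ?_, ?_, (optimalDist_five_mul_add_one m).symm⟩
  · have h := hasMinWeight_span_pair (v := v) (w := w) (M := m + 1) (by omega)
      (fun P => by simpa [h0] using hle P) (by simpa [h0] using hmax)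
    rwa [show 5 * m + 1 - (m + 1) = 4 * m by omega] at h
  · rwa [isHermLCD_span_pair_iff hind, det_gram]

lemma isOptimalLCD_countsA {m : ℕ} (hm : 2 ≤ m) {v w : Fin (5 * m + 1) → F4}
    (h0 : colCount v w none = 0) (hA : ∀ P, pointCount v w P = countsA m P) :
    IsOptimalLCD (5 * m + 1) (4 * m) (Submodule.span F4 {v, w}) := by
  refine isOptimalLCD_of_pointCount (by omega) h0 (fun P => ?_) ⟨some 1, by simp [hA, countsA]⟩ ?_
  · rw [hA, countsA]
    split_ifs <;> omega
  · rw [esymmTwo_natCast_eq_of_add_eq (M := m + 1) (α := 3) (β := 1) (γ := 0) (δ := 0) (ε := 0)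
      (by simp [hA, countsA]; omega) (by simp [hA, countsA]) (by simp [hA, countsA])
      (by simp [hA, countsA, F4.ω4_ne_zero]) (by simp [hA, countsA, F4.ω4_ne_zero]),
      Ne, CharP.cast_eq_zero_iff F4 2]
    decide

lemma isOptimalLCD_countsB {m : ℕ} (hm : 1 ≤ m) {v w : Fin (5 * m + 1) → F4}
    (h0 : colCount v w none = 0) (hB : ∀ P, pointCount v w P = countsB m P) :
    IsOptimalLCD (5 * m + 1) (4 * m) (Submodule.span F4 {v, w}) := by
  refine isOptimalLCD_of_pointCount hm h0 (fun P => ?_)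
    ⟨some ω4, by simp [hB, countsB, F4.ω4_ne_zero, F4.ω4_ne_one]⟩ ?_
  · rw [hB, countsB]
    split_ifs <;> omega
  · rw [esymmTwo_natCast_eq_of_add_eq (M := m + 1) (α := 2) (β := 1) (γ := 1) (δ := 0) (ε := 0)
      (by simp [hB, countsB]; omega) (by simp [hB, countsB]) (by simp [hB, countsB])
      (by simp [hB, countsB, F4.ω4_ne_zero, F4.ω4_ne_one])
      (by simp [hB, countsB, F4.ω4_ne_zero, F4.ω4_ne_one, CharTwo.neg_eq]),
      Ne, CharP.cast_eq_zero_iff F4 2]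
    decide

lemma not_codeEquiv_countsA_countsB {m : ℕ} (hm : 2 ≤ m) {vA wA vB wB : Fin (5 * m + 1) → F4}
    (hA0 : colCount vA wA none = 0) (hA : ∀ P, pointCount vA wA P = countsA m P)
    (hB0 : colCount vB wB none = 0) (hB : ∀ P, pointCount vB wB P = countsB m P) :
    ¬codeEquiv (Submodule.span F4 {vA, wA}) (Submodule.span F4 {vB, wB}) := by
  obtain ⟨x, hx, hwt⟩ := exists_mem_span_pair_wt_eq vA wA none
  refine not_codeEquiv_of_wt hx fun y hy => ?_
  have := wt_le_of_le_colCount_add_pointCount (M := m - 1) (fun P => ?_) y hy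
  · rw [hwt, hA0, hA, countsA, if_pos rfl]
    omega
  · rw [hB0, hB, countsB]
    split_ifs <;> omega

lemma pointCount_eq_countsA_or_countsB {m : ℕ} (hm : 1 ≤ m) {v w : Fin (5 * m + 1) → F4}
    (hopt : IsOptimalLCD (5 * m + 1) (4 * m) (Submodule.span F4 {v, w}))
    (h0 : pointCount v w none ≤ pointCount v w (some 0))
    (h1 : pointCount v w (some 0) ≤ pointCount v w (some 1))
    (hr : ∀ r, r ≠ 0 → r ≠ 1 → pointCount v w (some 1) ≤ pointCount v w (some r)) :
    colCount v w none = 0 ∧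
      ((∀ P, pointCount v w P = countsA m P) ∨ (∀ P, pointCount v w P = countsB m P)) := by
  obtain ⟨hrank, ⟨hmin, -⟩, hlcd, -⟩ := hopt
  have hind := finrank_span_pair_eq_two_iff.mp hrank
  have hle := colCount_add_pointCount_add_le hind (d := 4 * m) (by omega) hmin
  have hdet := (isHermLCD_span_pair_iff hind).mp hlcd
  rw [det_gram] at hdet
  obtain ⟨hn₀, hcounts⟩ := counts_eq_of_esymmTwo_ne_zero (colCount_none_add_pointCount_sum v w)
    (by have := hle none; omega) (by have := hle (some 0); omega)
    (by have := hle (some 1); omega) (by have := hle (some ω4); omega)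
    (by have := hle (some (ω4 ^ 2)); omega) h0 h1 (hr _ F4.ω4_ne_zero F4.ω4_ne_one)
    (hr _ F4.ω4_sq_ne_zero F4.ω4_sq_ne_one) hdet
  refine ⟨hn₀, hcounts.imp (fun h P => ?_) (fun h P => ?_)⟩ <;>
    rcases F4.option_cases P with rfl | rfl | rfl | rfl | rfl <;>
    simp [countsA, countsB, F4.ω4_ne_zero, F4.ω4_ne_one, CharTwo.neg_eq] <;> omega

end Classification

/-- for `m ≥ 2` there are exactly two equivalence classes of optimal
Hermitian LCD `[5m + 1, 2, 4m]` codes. -/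
theorem stmt10 (m : ℕ) (hm : 2 ≤ m) :
    ∃ C₁ C₂ : Submodule F4 (Fin (5 * m + 1) → F4),
      IsOptimalLCD (5 * m + 1) (4 * m) C₁ ∧ IsOptimalLCD (5 * m + 1) (4 * m) C₂ ∧
      ¬ codeEquiv C₁ C₂ ∧
      ∀ C : Submodule F4 (Fin (5 * m + 1) → F4), IsOptimalLCD (5 * m + 1) (4 * m) C →
        (codeEquiv C C₁ ∨ codeEquiv C C₂) := by
  obtain ⟨vA, wA, hA0, hA⟩ := exists_pointCount_eq (countsA m) (sum_countsA hm)
  obtain ⟨vB, wB, hB0, hB⟩ := exists_pointCount_eq (countsB m) (sum_countsB (by omega))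
  refine ⟨_, _, isOptimalLCD_countsA hm hA0 hA, isOptimalLCD_countsB (by omega) hB0 hB,
    not_codeEquiv_countsA_countsB hm hA0 hA hB0 hB, fun C hC => ?_⟩
  obtain ⟨v₀, w₀, rfl⟩ := exists_span_pair_of_finrank_eq_two hC.1
  obtain ⟨v, w, hvw, h0, h1, hr⟩ := exists_span_pair_eq_sorted v₀ w₀
  rw [← hvw] at hC ⊢
  obtain ⟨hn₀, hAB⟩ := pointCount_eq_countsA_or_countsB (by omega) hC h0 h1 hr
  refine hAB.imp (fun h => codeEquiv_of_colCount_eq ?_) (fun h => codeEquiv_of_colCount_eq ?_) <;>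
    rintro (_ | P) <;> simp_all [pointCount]
end
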